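/- arXiv:1609.03728 — 8 statements merged into one kernel-verified Lean document; each statement's English description precedes it below -/
import Mathlib

section
/- Let $(N_p)_{p\in\mathbb{N}}$ be a sequence of positive numbers with $N_0=N_1=1$ satisfying $(N_p/p!)^2 \le (N_{p-1}/(p-1)!)\cdot(N_{p+1}/(p+1)!)$ for all $p\ge 1$ (condition (M.4)). Then for all multi-indices $\alpha,\beta\in\mathbb{N}^d$ with $\beta\le\alpha$ and $1\le|\beta|\le|\alpha|-1$, one has $\binom{\alpha}{\beta} N_{|\alpha|-|\beta|} N_{|\beta|} \le |\alpha| \, N_{|\alpha|-1}$. -/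
open Finset

/-- One term of the Vandermonde sum. -/
lemma choose_mul_choose_le (a b c e : ℕ) :
    a.choose c * b.choose e ≤ (a + b).choose (c + e) := by
  rw [Nat.add_choose_eq]
  exact Finset.single_le_sum (f := fun ij : ℕ × ℕ => a.choose ij.1 * b.choose ij.2)
    (fun _ _ => Nat.zero_le _) (a := (c, e)) (by simp)

lemma prod_choose_le_choose (d : ℕ) (α β : Fin d → ℕ) :
    ∏ i, (α i).choose (β i) ≤ (∑ i, α i).choose (∑ i, β i) := by
  classical
  induction (Finset.univ : Finset (Fin d)) using Finset.induction with
  | empty => simp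
  | @insert a s hx ih =>
    rw [Finset.prod_insert hx, Finset.sum_insert hx, Finset.sum_insert hx]
    calc (α a).choose (β a) * ∏ i ∈ s, (α i).choose (β i)
        ≤ (α a).choose (β a) * (∑ i ∈ s, α i).choose (∑ i ∈ s, β i) :=
          Nat.mul_le_mul_left _ ih
      _ ≤ _ := choose_mul_choose_le _ _ _ _

section M
variable (M : ℕ → ℝ) (hMpos : ∀ p, 0 < M p)
  (hconv : ∀ p : ℕ, M (p + 1) ^ 2 ≤ M p * M (p + 2))

include hMpos hconv in
lemma ratio_mono : ∀ a b : ℕ, a ≤ b → M (a + 1) * M b ≤ M a * M (b + 1) := by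
  intro a b hab
  induction b with
  | zero => interval_cases a; exact (mul_comm _ _).le
  | succ b ih =>
    rcases Nat.lt_or_ge a (b + 1) with h | h
    · have h1 := ih (Nat.lt_succ_iff.mp h)
      have h2 := hconv b
      have p1 := hMpos b
      have p2 := hMpos (b + 1)
      have p3 := hMpos (a + 1)
      have p4 := hMpos a
      nlinarith [mul_pos p1 p2, mul_le_mul h1 h2 (sq_nonneg _) (by positivity)]
    · have : a = b + 1 := le_antisymm hab h
      subst this; exact (mul_comm _ _).le

include hMpos hconv in
lemma prod_le_ordered : ∀ a b : ℕ, a ≤ b → M (a + 1) * M (b + 1) ≤ M 1 * M (a + b + 1) := by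
  intro a
  induction a with
  | zero => intro b _; simp
  | succ a ih =>
    intro b hab
    have h1 : M (a + 1 + 1) * M (b + 1) ≤ M (a + 1) * M (b + 1 + 1) :=
      ratio_mono M hMpos hconv (a + 1) (b + 1) (by omega)
    have h2 := ih (b + 1) (by omega)
    calc M (a + 1 + 1) * M (b + 1) ≤ M (a + 1) * M (b + 1 + 1) := h1
      _ ≤ M 1 * M (a + (b + 1) + 1) := h2
      _ = M 1 * M (a + 1 + b + 1) := by ring_nf

include hMpos hconv in
lemma prod_le (a b : ℕ) : M (a + 1) * M (b + 1) ≤ M 1 * M (a + b + 1) := by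
  rcases le_total a b with h | h
  · exact prod_le_ordered M hMpos hconv a b h
  · have := prod_le_ordered M hMpos hconv b a h
    rw [mul_comm (M (b+1))] at this
    calc M (a + 1) * M (b + 1) ≤ M 1 * M (b + a + 1) := this
      _ = M 1 * M (a + b + 1) := by rw [Nat.add_comm b a]

end M

/-- If `N` is a positive sequence with `N 0 = N 1 = 1` satisfying condition
(M.4) (log-convexity of `N p / p!`), then for all multi-indices `β ≤ α` in `ℕ^d` with
`1 ≤ |β| ≤ |α| - 1`, one has `(α choose β) * N (|α| - |β|) * N |β| ≤ |α| * N (|α| - 1)`. -/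
theorem stmt1 (d : ℕ) (N : ℕ → ℝ) (hpos : ∀ p, 0 < N p) (hN0 : N 0 = 1) (hN1 : N 1 = 1)
    (hM4 : ∀ p : ℕ, 1 ≤ p →
      (N p / (Nat.factorial p)) ^ 2 ≤
        (N (p - 1) / (Nat.factorial (p - 1))) * (N (p + 1) / (Nat.factorial (p + 1))))
    (α β : Fin d → ℕ) (hβα : ∀ i, β i ≤ α i)
    (h1 : 1 ≤ ∑ i, β i) (h2 : ∑ i, β i ≤ (∑ i, α i) - 1) :
    ((∏ i, Nat.choose (α i) (β i) : ℕ) : ℝ) * N ((∑ i, α i) - (∑ i, β i)) * N (∑ i, β i)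
      ≤ ((∑ i, α i : ℕ) : ℝ) * N ((∑ i, α i) - 1) := by
  set M : ℕ → ℝ := fun p => N p / (Nat.factorial p) with hM
  have hMpos : ∀ p, 0 < M p := fun p => div_pos (hpos p) (by positivity)
  have hconv : ∀ p : ℕ, M (p + 1) ^ 2 ≤ M p * M (p + 2) := by
    intro p
    have := hM4 (p + 1) (by omega)
    simpa using this
  set p := ∑ i, α i with hp
  set q := ∑ i, β i with hq
  have hqp : q + 1 ≤ p := by
    have : q ≤ p := Finset.sum_le_sum fun i _ => hβα i
    omega
  -- key: M q * M (p - q) ≤ M 1 * M (p - 1)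
  obtain ⟨a, ha⟩ : ∃ a, q = a + 1 := ⟨q - 1, by omega⟩
  obtain ⟨b, hb⟩ : ∃ b, p - q = b + 1 := ⟨p - q - 1, by omega⟩
  have habp : a + b + 1 = p - 1 := by omega
  have key : M q * M (p - q) ≤ M 1 * M (p - 1) := by
    rw [hb, ha, ← habp]
    exact prod_le M hMpos hconv a b
  -- binomial product bound
  have hchoose : ((∏ i, Nat.choose (α i) (β i) : ℕ) : ℝ) ≤ (p.choose q : ℝ) := by
    exact_mod_cast prod_choose_le_choose d α β
  have hfq : (0:ℝ) < (Nat.factorial q : ℝ) := by positivity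
  have hfpq : (0:ℝ) < (Nat.factorial (p - q) : ℝ) := by positivity
  have hM1 : M 1 = 1 := by simp [hM, hN1]
  -- C(p,q) * N(p-q) * N q ≤ p * N (p-1)
  have hCfact : (p.choose q : ℝ) * (Nat.factorial q) * (Nat.factorial (p - q))
      = (Nat.factorial p : ℝ) := by
    exact_mod_cast congrArg (Nat.cast (R := ℝ))
      (Nat.choose_mul_factorial_mul_factorial (by omega : q ≤ p))
  have hfact : (Nat.factorial p : ℝ) = p * Nat.factorial (p - 1) := by
    obtain ⟨c, hc⟩ : ∃ c, p = c + 1 := ⟨p - 1, by omega⟩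
    rw [hc]
    push_cast [Nat.factorial_succ]
    simp
  have hmain : (p.choose q : ℝ) * N (p - q) * N q ≤ (p : ℝ) * N (p - 1) := by
    have hNq : N q = M q * Nat.factorial q := by
      simp only [hM]; rw [div_mul_cancel₀ _ (Nat.cast_ne_zero.mpr (Nat.factorial_ne_zero _))]
    have hNpq : N (p - q) = M (p - q) * Nat.factorial (p - q) := by
      simp only [hM]; rw [div_mul_cancel₀ _ (Nat.cast_ne_zero.mpr (Nat.factorial_ne_zero _))]
    have hNp1 : N (p - 1) = M (p - 1) * Nat.factorial (p - 1) := by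
      simp only [hM]; rw [div_mul_cancel₀ _ (Nat.cast_ne_zero.mpr (Nat.factorial_ne_zero _))]
    rw [hNq, hNpq, hNp1]
    calc (p.choose q : ℝ) * (M (p - q) * Nat.factorial (p - q)) * (M q * Nat.factorial q)
        = (M q * M (p - q)) * ((p.choose q : ℝ) * Nat.factorial q * Nat.factorial (p - q)) := by
          ring
      _ ≤ (M 1 * M (p - 1)) * (Nat.factorial p : ℝ) := by
          rw [hCfact]
          exact mul_le_mul_of_nonneg_right key (by positivity)
      _ = (p : ℝ) * (M (p - 1) * Nat.factorial (p - 1)) := by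
          rw [hM1, hfact]; ring
  calc ((∏ i, Nat.choose (α i) (β i) : ℕ) : ℝ) * N (p - q) * N q
      ≤ (p.choose q : ℝ) * N (p - q) * N q := by
        apply mul_le_mul_of_nonneg_right _ (hpos q).le
        exact mul_le_mul_of_nonneg_right hchoose (hpos (p - q)).le
    _ ≤ (p : ℝ) * N (p - 1) := hmain
end

section
/- For all complex numbers $z,\zeta$ and every integer $n\ge 2$, the identity $\prod_{j=2}^n (j-z-\zeta) = \sum_{j=1}^n \binom{n-1}{j-1} \prod_{l=1}^{n-j}(l-z) \cdot \prod_{k=1}^{j-1}(k-\zeta)$ holds, where empty products equal $1$. -/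
/-!
Writing `(x)_m = x (x - 1) ⋯ (x - m + 1)` for the falling factorial, `∏_{k=1}^m (k - c)` equals
`(-1)^m (c - 1)_m`. With `n = N + 1` the left side becomes `(-1)^N (z + ζ - 2)_N` and the `j`-th
summand `(-1)^N C(N, j-1) (ζ - 1)_{j-1} (z - 1)_{N-j+1}`, so the identity is the Chu–Vandermonde
identity for falling factorials at `ζ - 1` and `z - 1`.
-/

open Finset Polynomial

theorem descPochhammer_eval_add {R : Type*} [CommRing R] (r s : R) (k : ℕ) :
    (descPochhammer R k).eval (r + s) = ∑ i ∈ range (k + 1),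
      (k.choose i : R) * (descPochhammer R i).eval r * (descPochhammer R (k - i)).eval s := by
  have hsmeval (m : ℕ) (x : R) : (descPochhammer ℤ m).smeval x = (descPochhammer R m).eval x := by
    rw [← aeval_eq_smeval, ← eval_map_algebraMap, descPochhammer_map]
  simp only [← hsmeval, Ring.descPochhammer_smeval_add k (Commute.all r s), mul_assoc]
  exact Nat.sum_antidiagonal_eq_sum_range_succ
    (fun i j => (k.choose i : R) * ((descPochhammer ℤ i).smeval r * (descPochhammer ℤ j).smeval s)) k

theorem prod_Icc_natCast_sub_eq_descPochhammer {R : Type*} [CommRing R] (c : R) (m : ℕ) :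
    ∏ k ∈ Icc 1 m, ((k : R) - c) = (-1) ^ m * (descPochhammer R m).eval (c - 1) := by
  induction m with
  | zero => simp
  | succ m ih =>
    rw [prod_Icc_succ_top (by omega), ih, descPochhammer_succ_eval]
    push_cast
    ring

/-- For all complex `z, ζ` and integers `n ≥ 2`,
`∏_{j=2}^n (j - z - ζ) = ∑_{j=1}^n C(n-1, j-1) ∏_{l=1}^{n-j} (l - z) ∏_{k=1}^{j-1} (k - ζ)`,
where empty products equal `1`. -/
theorem stmt2 (z ζ : ℂ) (n : ℕ) (hn : 2 ≤ n) :
    ∏ j ∈ Finset.Icc 2 n, ((j : ℂ) - z - ζ) =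
      ∑ j ∈ Finset.Icc 1 n, ((Nat.choose (n - 1) (j - 1) : ℕ) : ℂ) *
        (∏ l ∈ Finset.Icc 1 (n - j), ((l : ℂ) - z)) *
        (∏ k ∈ Finset.Icc 1 (j - 1), ((k : ℂ) - ζ)) := by
  obtain ⟨N, rfl⟩ : ∃ N, n = N + 1 := ⟨n - 1, by omega⟩
  have hlhs : ∏ j ∈ Icc 2 (N + 1), ((j : ℂ) - z - ζ) = ∏ k ∈ Icc 1 N, ((k : ℂ) - (z + ζ - 1)) := by
    rw [← map_add_right_Icc 1 N 1, prod_map]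
    refine prod_congr rfl fun k _ => ?_
    push_cast [addRightEmbedding_apply]
    ring
  have hrhs : Icc 1 (N + 1) = (range (N + 1)).map (addRightEmbedding 1) := by
    rw [Nat.range_succ_eq_Icc_zero, map_add_right_Icc]
  rw [hlhs, prod_Icc_natCast_sub_eq_descPochhammer, show z + ζ - 1 - 1 = (ζ - 1) + (z - 1) by ring,
    descPochhammer_eval_add, mul_sum, hrhs, sum_map]
  refine sum_congr rfl fun i hi => ?_
  have hiN : i ≤ N := Nat.lt_succ_iff.mp (mem_range.mp hi)
  simp only [addRightEmbedding_apply, Nat.add_sub_cancel, Nat.reduceSubDiff,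
    prod_Icc_natCast_sub_eq_descPochhammer]
  rw [show (-1 : ℂ) ^ N = (-1) ^ (N - i) * (-1) ^ i by rw [← pow_add, Nat.sub_add_cancel hiN]]
  ring
end

section
/- Let $z\in\mathbb{C}$ with $\mathrm{Re}\,z>0$, let $k\in\mathbb{Z}_+$ with $k>\mathrm{Re}\,z$, and let $\zeta\in\mathbb{C}\setminus\{0\}$ with $|\arg\zeta|<\pi$. Then $\int_0^{\infty} \frac{\lambda^{z-1}\zeta^k}{(\zeta+\lambda)^k}\,d\lambda = \frac{\zeta^z}{\gamma_k(z)}$, where $\gamma_k(z)=\Gamma(k)/(\Gamma(z)\Gamma(k-z))$ and $\zeta^z$ is defined by the principal branch of the logarithm. -/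
/-!
For `ζ = r > 0` the substitutions `λ = r t` and `t = x / (1 - x)` turn the integral
`∫₀^∞ λ^(z-1) (ζ + λ)^(-k) dλ` into `r^(z-k) B(z, k - z) = r^(z-k) Γ(z) Γ(k - z) / Γ(k)`.
Both sides are holomorphic in `ζ` on the slit plane: on a small ball around any of its points
`|ζ + λ| ≥ m (1 + λ)` uniformly in `λ ≥ 0`, which dominates the `ζ`-derivative of the integrand.
By the identity theorem they agree on the whole slit plane, and multiplying by `ζ^k` gives the
claim since `ζ^k ζ^(z-k) = ζ^z`.
-/

open MeasureTheory Complex Set Filter Topology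

lemma exists_pos_mul_one_add_le_norm_add_ofReal {ζ : ℂ} (hζ : ζ ∈ slitPlane) :
    ∃ m > 0, ∀ t : ℝ, 0 ≤ t → m * (1 + t) ≤ ‖ζ + t‖ := by
  set a := ‖ζ‖
  have ha : 0 < a := norm_pos_iff.2 (slitPlane_ne_zero hζ)
  have hs : 0 < a + ζ.re := by
    rcases mem_slitPlane_iff.1 hζ with h | h
    · linarith
    · linarith [neg_abs_le ζ.re, abs_re_lt_norm.2 h]
  have hsa : a + ζ.re ≤ 2 * a := by linarith [re_le_norm ζ]
  -- `c = cos² (arg ζ / 2)`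
  set c := (a + ζ.re) / (2 * a)
  have hc0 : 0 < c := by positivity
  have hc1 : c ≤ 1 := (div_le_one (by positivity)).2 hsa
  refine ⟨c * min a 1, by positivity, fun t ht => ?_⟩
  have hsq : c * (a + t) ^ 2 ≤ ‖ζ + t‖ ^ 2 := by
    have hnorm : ‖ζ + t‖ ^ 2 = a ^ 2 + 2 * t * ζ.re + t ^ 2 := by
      simp only [a, Complex.sq_norm, normSq_apply, add_re, add_im, ofReal_re, ofReal_im]
      ring
    rw [hnorm, ← sub_nonneg]
    have key : a ^ 2 + 2 * t * ζ.re + t ^ 2 - c * (a + t) ^ 2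
        = (a - ζ.re) * (a - t) ^ 2 / (2 * a) := by
      simp only [c]
      field_simp
      ring
    have : 0 ≤ a - ζ.re := sub_nonneg.2 (re_le_norm ζ)
    rw [key]
    positivity
  have hlin : c * (a + t) ≤ ‖ζ + t‖ := by
    refine le_of_sq_le_sq ?_ (norm_nonneg _)
    nlinarith [mul_le_mul_of_nonneg_right hc1 (mul_nonneg hc0.le (sq_nonneg (a + t)))]
  calc c * min a 1 * (1 + t) ≤ c * (a + t) := by
        rw [mul_assoc]
        gcongr
        nlinarith [min_le_left a 1, min_le_right a 1]
    _ ≤ ‖ζ + t‖ := hlin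

lemma exists_ball_mul_one_add_le_norm_add_ofReal {ζ₀ : ℂ} (hζ₀ : ζ₀ ∈ slitPlane) :
    ∃ m > 0, ∀ ζ ∈ Metric.ball ζ₀ m, ∀ t : ℝ, 0 ≤ t → m * (1 + t) ≤ ‖ζ + t‖ := by
  obtain ⟨m, hm, hbound⟩ := exists_pos_mul_one_add_le_norm_add_ofReal hζ₀
  refine ⟨m / 2, half_pos hm, fun ζ hζ t ht => ?_⟩
  have hdist : ‖ζ₀ - ζ‖ < m / 2 := by rwa [← dist_eq_norm, ← Metric.mem_ball']
  have htri : ‖ζ₀ + t‖ ≤ ‖ζ + t‖ + ‖ζ₀ - ζ‖ := by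
    calc ‖ζ₀ + t‖ = ‖(ζ + t) + (ζ₀ - ζ)‖ := by ring_nf
      _ ≤ ‖ζ + t‖ + ‖ζ₀ - ζ‖ := norm_add_le _ _
  nlinarith [hbound t ht]

lemma integrableOn_rpow_mul_one_add_inv_pow {x : ℝ} (hx : -1 < x) {n : ℕ} (hxn : x - n < -1) :
    IntegrableOn (fun t : ℝ => t ^ x * (1 + t)⁻¹ ^ n) (Ioi 0) := by
  have hmeas : AEStronglyMeasurable (fun t : ℝ => t ^ x * (1 + t)⁻¹ ^ n) :=
    (by fun_prop : Measurable _).aestronglyMeasurable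
  rw [← Ioc_union_Ioi_eq_Ioi zero_le_one]
  refine IntegrableOn.union ?_ ?_
  · have hpow : IntegrableOn (fun t : ℝ => t ^ x) (Ioc 0 1) :=
      (intervalIntegrable_iff_integrableOn_Ioc_of_le zero_le_one).1
        (intervalIntegral.intervalIntegrable_rpow' hx)
    refine hpow.mono' hmeas.restrict ?_
    filter_upwards [ae_restrict_mem measurableSet_Ioc] with t ht
    have ht0 : 0 < t := ht.1
    rw [Real.norm_of_nonneg (by positivity)]
    refine mul_le_of_le_one_right (by positivity) (pow_le_one₀ (by positivity) ?_)
    exact inv_le_one_of_one_le₀ (by linarith)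
  · refine (integrableOn_Ioi_rpow_of_lt hxn one_pos).mono' hmeas.restrict ?_
    filter_upwards [ae_restrict_mem measurableSet_Ioi] with t (ht : 1 < t)
    have ht0 : 0 < t := one_pos.trans ht
    rw [Real.norm_of_nonneg (by positivity), Real.rpow_sub ht0, Real.rpow_natCast, div_eq_mul_inv,
      ← inv_pow]
    gcongr
    linarith

lemma norm_cpow_mul_add_zpow_le {w c : ℂ} {n : ℕ} {m t : ℝ} (hm : 0 < m) (ht : 0 < t)
    (hc : m * (1 + t) ≤ ‖c + t‖) :
    ‖(t : ℂ) ^ w * (c + t) ^ (-(n : ℤ))‖ ≤ m⁻¹ ^ n * (t ^ w.re * (1 + t)⁻¹ ^ n) := by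
  rw [norm_mul, norm_cpow_eq_rpow_re_of_pos ht, norm_zpow, zpow_neg, zpow_natCast, ← inv_pow,
    mul_left_comm, ← mul_pow, ← mul_inv]
  gcongr

lemma integrableOn_cpow_mul_add_zpow {w : ℂ} (hw : -1 < w.re) {n : ℕ} (hwn : w.re - n < -1)
    {c : ℂ} {m : ℝ} (hm : 0 < m) (hc : ∀ t : ℝ, 0 ≤ t → m * (1 + t) ≤ ‖c + t‖) :
    IntegrableOn (fun t : ℝ => (t : ℂ) ^ w * (c + t) ^ (-(n : ℤ))) (Ioi 0) := by
  refine ((integrableOn_rpow_mul_one_add_inv_pow hw hwn).const_mul (m⁻¹ ^ n)).mono'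
    (by fun_prop : Measurable _).aestronglyMeasurable.restrict ?_
  filter_upwards [ae_restrict_mem measurableSet_Ioi] with t (ht : 0 < t)
  exact norm_cpow_mul_add_zpow_le hm ht (hc t ht.le)

lemma differentiableOn_integral_Ioi_cpow_mul_add_zpow {w : ℂ} (hw : -1 < w.re) {n : ℕ}
    (hwn : w.re - n < -1) :
    DifferentiableOn ℂ (fun ζ : ℂ => ∫ t in Ioi (0 : ℝ), (t : ℂ) ^ w * (ζ + t) ^ (-(n : ℤ)))
      slitPlane := by
  intro ζ₀ hζ₀
  obtain ⟨m, hm, hbound⟩ := exists_ball_mul_one_add_le_norm_add_ofReal hζ₀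
  have hne : ∀ ζ ∈ Metric.ball ζ₀ m, ∀ t : ℝ, 0 ≤ t → ζ + t ≠ 0 := fun ζ hζ t ht =>
    norm_pos_iff.1 ((by positivity : 0 < m * (1 + t)).trans_le (hbound ζ hζ t ht))
  have hwn' : w.re - (n + 1 : ℕ) < -1 := by push_cast; linarith
  refine (hasDerivAt_integral_of_dominated_loc_of_deriv_le (μ := volume.restrict (Ioi 0))
    (F := fun ζ (t : ℝ) => (t : ℂ) ^ w * (ζ + t) ^ (-(n : ℤ))) (Metric.ball_mem_nhds ζ₀ hm)
    (F' := fun ζ (t : ℝ) => (t : ℂ) ^ w * (((-(n : ℤ) : ℤ) : ℂ) * (ζ + t) ^ (-(n : ℤ) - 1)))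
    (bound := fun t => n * (m⁻¹ ^ (n + 1) * (t ^ w.re * (1 + t)⁻¹ ^ (n + 1))))
    (Eventually.of_forall fun ζ => (by fun_prop : Measurable _).aestronglyMeasurable)
    (integrableOn_cpow_mul_add_zpow hw hwn hm (hbound ζ₀ (Metric.mem_ball_self hm)))
    (by fun_prop : Measurable _).aestronglyMeasurable ?_
    (((integrableOn_rpow_mul_one_add_inv_pow hw hwn').const_mul _).const_mul _) ?_).2
    |>.differentiableAt.differentiableWithinAt
  · filter_upwards [ae_restrict_mem measurableSet_Ioi] with t (ht : 0 < t) ζ hζ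
    have hexp : -(n : ℤ) - 1 = -((n + 1 : ℕ) : ℤ) := by push_cast; ring
    rw [mul_left_comm, norm_mul, hexp]
    simp only [Int.cast_neg, Int.cast_natCast, norm_neg, Complex.norm_natCast]
    exact mul_le_mul_of_nonneg_left (norm_cpow_mul_add_zpow_le hm ht (hbound ζ hζ t ht.le))
      n.cast_nonneg
  · filter_upwards [ae_restrict_mem measurableSet_Ioi] with t (ht : 0 < t) ζ hζ
    exact ((hasDerivAt_zpow _ _ (Or.inl (hne ζ hζ t ht.le))).comp ζ
      ((hasDerivAt_id ζ).add_const (t : ℂ))).const_mul ((t : ℂ) ^ w) |>.congr_deriv (by simp)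

lemma image_div_one_sub_Ioo : (fun x : ℝ => x / (1 - x)) '' Ioo 0 1 = Ioi 0 := by
  ext y
  constructor
  · rintro ⟨x, ⟨hx0, hx1⟩, rfl⟩
    exact div_pos hx0 (sub_pos.2 hx1)
  · intro (hy : 0 < y)
    refine ⟨y / (1 + y), ⟨by positivity, (div_lt_one (by positivity)).2 (by linarith)⟩, ?_⟩
    field_simp
    ring

lemma integral_Ioi_cpow_mul_one_add_cpow (a b : ℂ) :
    ∫ t in Ioi (0 : ℝ), (t : ℂ) ^ (a - 1) * (1 + t) ^ (-(a + b)) = betaIntegral a b := by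
  have hderiv : ∀ x ∈ Ioo (0 : ℝ) 1,
      HasDerivWithinAt (fun x : ℝ => x / (1 - x)) ((1 - x) ^ 2)⁻¹ (Ioo 0 1) x := by
    intro x ⟨_, hx1⟩
    have hx : 1 - x ≠ 0 := (sub_pos.2 hx1).ne'
    refine (((hasDerivAt_id x).div ((hasDerivAt_id x).const_sub 1) hx).congr_deriv ?_)
      |>.hasDerivWithinAt
    simp only [id]
    field_simp
    ring
  have hinj : InjOn (fun x : ℝ => x / (1 - x)) (Ioo 0 1) := by
    intro x ⟨_, hx1⟩ y ⟨_, hy1⟩ h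
    rw [div_eq_div_iff (sub_pos.2 hx1).ne' (sub_pos.2 hy1).ne'] at h
    linarith
  rw [← image_div_one_sub_Ioo,
    integral_image_eq_integral_abs_deriv_smul measurableSet_Ioo hderiv hinj, betaIntegral,
    intervalIntegral.integral_of_le zero_le_one, integral_Ioc_eq_integral_Ioo]
  refine setIntegral_congr_fun measurableSet_Ioo fun x ⟨hx0, hx1⟩ => ?_
  have hy : (0 : ℝ) < 1 - x := sub_pos.2 hx1
  have hY : ((1 - x : ℝ) : ℂ) ≠ 0 := ofReal_ne_zero.2 hy.ne'
  have hsum : (1 : ℂ) + ((x / (1 - x) : ℝ) : ℂ) = ((1 - x : ℝ) : ℂ)⁻¹ := by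
    rw [← ofReal_one, ← ofReal_add, ← ofReal_inv]
    congr 1
    field_simp
    ring
  have hpow : ((1 - x : ℝ) : ℂ) ^ (a + b)
      = ((1 - x : ℝ) : ℂ) ^ (b - 1) * ((1 - x : ℝ) : ℂ) ^ (a - 1) * ((1 - x : ℝ) : ℂ) ^ 2 := by
    rw [← cpow_natCast, ← cpow_add _ _ hY, ← cpow_add _ _ hY]
    congr 1
    push_cast
    ring
  have hne : ((1 - x : ℝ) : ℂ) ^ (a - 1) ≠ 0 := cpow_ne_zero_iff.2 (Or.inl hY)
  rw [abs_of_pos (by positivity), real_smul, ofReal_div, div_cpow_ofReal_nonneg hx0.le hy.le,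
    ← ofReal_div, hsum, inv_cpow_ofReal_nonneg hy.le, cpow_neg, inv_inv, hpow, ofReal_inv,
    ofReal_pow, show (1 : ℂ) - x = ((1 - x : ℝ) : ℂ) by push_cast; ring]
  field_simp

lemma integral_Ioi_cpow_mul_ofReal_add_cpow (a s : ℂ) {r : ℝ} (hr : 0 < r) :
    ∫ t in Ioi (0 : ℝ), (t : ℂ) ^ (a - 1) * (r + t) ^ s
      = (r : ℂ) ^ (a + s) * ∫ t in Ioi (0 : ℝ), (t : ℂ) ^ (a - 1) * (1 + t) ^ s := by
  have hscale := integral_comp_mul_left_Ioi' (fun t : ℝ => (t : ℂ) ^ (a - 1) * (r + t) ^ s) 0 hr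
  rw [mul_zero] at hscale
  rw [← hscale, ← integral_const_mul, ← integral_smul]
  refine setIntegral_congr_fun measurableSet_Ioi fun t (ht : 0 < t) => ?_
  have hR : (r : ℂ) ≠ 0 := ofReal_ne_zero.2 hr.ne'
  have hsum : (r : ℂ) + ((r * t : ℝ) : ℂ) = ((r * (1 + t) : ℝ) : ℂ) := by push_cast; ring
  have hpow : (r : ℂ) ^ (a + s) = r * ((r : ℂ) ^ (a - 1) * (r : ℂ) ^ s) := by
    rw [← cpow_add _ _ hR]
    nth_rw 2 [← cpow_one (r : ℂ)]
    rw [← cpow_add _ _ hR]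
    congr 1
    ring
  rw [hsum, ofReal_mul, ofReal_mul, mul_cpow_ofReal_nonneg hr.le ht.le,
    mul_cpow_ofReal_nonneg hr.le (by positivity), hpow, real_smul, ofReal_add, ofReal_one]
  ring

lemma integral_Ioi_cpow_mul_ofReal_add_zpow {z : ℂ} (hz : 0 < z.re) {k : ℕ} (hkz : z.re < k)
    {r : ℝ} (hr : 0 < r) :
    ∫ t in Ioi (0 : ℝ), (t : ℂ) ^ (z - 1) * (r + t) ^ (-(k : ℤ))
      = (r : ℂ) ^ (z - k) * (Gamma z * Gamma (k - z) / Gamma k) := by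
  have hcpow : ∀ c : ℂ, c ^ (-(k : ℤ)) = c ^ (-(z + (k - z))) := fun c => by
    rw [← cpow_intCast]
    congr 1
    push_cast
    ring
  have hkz' : 0 < ((k : ℂ) - z).re := by simpa using hkz
  have hk : Gamma k ≠ 0 := Gamma_ne_zero_of_re_pos (by simpa using hz.trans hkz)
  simp_rw [hcpow]
  rw [integral_Ioi_cpow_mul_ofReal_add_cpow _ _ hr, integral_Ioi_cpow_mul_one_add_cpow,
    Gamma_mul_Gamma_eq_betaIntegral hz hkz', add_sub_cancel, mul_div_cancel_left₀ _ hk]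
  ring_nf

lemma integral_Ioi_cpow_mul_add_zpow {z : ℂ} (hz : 0 < z.re) {k : ℕ} (hkz : z.re < k) {ζ : ℂ}
    (hζ : ζ ∈ slitPlane) :
    ∫ t in Ioi (0 : ℝ), (t : ℂ) ^ (z - 1) * (ζ + t) ^ (-(k : ℤ))
      = ζ ^ (z - k) * (Gamma z * Gamma (k - z) / Gamma k) := by
  have hF := differentiableOn_integral_Ioi_cpow_mul_add_zpow (w := z - 1) (n := k)
    (by simpa using hz) (by simp; linarith)
  have hG : DifferentiableOn ℂ (fun ζ : ℂ => ζ ^ (z - k) * (Gamma z * Gamma (k - z) / Gamma k))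
      slitPlane := fun ζ hζ =>
    ((differentiableAt_id.cpow_const hζ).mul_const _).differentiableWithinAt
  have hreal : ∀ᶠ x : ℝ in 𝓝[≠] 1,
      ∫ t in Ioi (0 : ℝ), (t : ℂ) ^ (z - 1) * ((x : ℂ) + t) ^ (-(k : ℤ))
        = (x : ℂ) ^ (z - k) * (Gamma z * Gamma (k - z) / Gamma k) :=
    eventually_nhdsWithin_of_eventually_nhds <| (lt_mem_nhds one_pos).mono fun x hx =>
      integral_Ioi_cpow_mul_ofReal_add_zpow hz hkz hx
  have hofReal : Tendsto ((↑) : ℝ → ℂ) (𝓝[≠] 1) (𝓝[≠] 1) :=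
    tendsto_nhdsWithin_of_tendsto_nhds_of_eventually_within _
      (continuous_ofReal.tendsto' 1 1 ofReal_one |>.mono_left nhdsWithin_le_nhds)
      (eventually_mem_nhdsWithin.mono fun x hx => by simpa using hx)
  exact (hF.analyticOnNhd isOpen_slitPlane).eqOn_of_preconnected_of_frequently_eq
    (hG.analyticOnNhd isOpen_slitPlane)
    (starConvex_one_slitPlane.isPathConnected one_mem_slitPlane).isConnected.isPreconnected
    one_mem_slitPlane (hofReal.frequently hreal.frequently) hζ

theorem stmt3_general (z : ℂ) (hz : 0 < z.re) (k : ℕ) (hkz : z.re < k)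
    (ζ : ℂ) (hζ : ζ ≠ 0) (harg : |Complex.arg ζ| < Real.pi) :
    ∫ lam in Set.Ioi (0 : ℝ), (lam : ℂ) ^ (z - 1) * ζ ^ k / (ζ + lam) ^ k =
      ζ ^ z / (Complex.Gamma k / (Complex.Gamma z * Complex.Gamma ((k : ℂ) - z))) := by
  have hslit : ζ ∈ slitPlane := mem_slitPlane_iff_arg.2 ⟨(lt_of_abs_lt harg).ne, hζ⟩
  have hpow : ζ ^ z = ζ ^ k * ζ ^ (z - k) := by
    rw [← cpow_natCast, ← cpow_add _ _ hζ, add_sub_cancel]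
  calc ∫ lam in Ioi (0 : ℝ), (lam : ℂ) ^ (z - 1) * ζ ^ k / (ζ + lam) ^ k
      = ζ ^ k * ∫ lam in Ioi (0 : ℝ), (lam : ℂ) ^ (z - 1) * (ζ + lam) ^ (-(k : ℤ)) := by
        rw [← integral_const_mul]
        simp only [zpow_neg, zpow_natCast, div_eq_mul_inv, mul_left_comm (ζ ^ k), mul_assoc]
    _ = _ := by rw [integral_Ioi_cpow_mul_add_zpow hz hkz hslit, hpow, div_div_eq_mul_div]; ring

/-- For `Re z > 0`, an integer `k > Re z`, and `ζ ≠ 0` with `|arg ζ| < π`,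
`∫_0^∞ λ^{z-1} ζ^k / (ζ + λ)^k dλ = ζ^z / γ_k(z)` where
`γ_k(z) = Γ(k) / (Γ(z) Γ(k - z))` and `ζ^z` uses the principal logarithm. -/
theorem stmt3 (z : ℂ) (hz : 0 < z.re) (k : ℕ) (hk : 1 ≤ k) (hkz : z.re < k)
    (ζ : ℂ) (hζ : ζ ≠ 0) (harg : |Complex.arg ζ| < Real.pi) :
    ∫ lam in Set.Ioi (0 : ℝ), (lam : ℂ) ^ (z - 1) * ζ ^ k / (ζ + lam) ^ k =
      ζ ^ z / (Complex.Gamma k / (Complex.Gamma z * Complex.Gamma ((k : ℂ) - z))) :=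
  stmt3_general z hz k hkz ζ hζ harg
end

section
/- Let $M_p$ be a sequence of positive numbers with $M_0=1$ satisfying $M_p^2\le M_{p-1}M_{p+1}$ (log-convexity) and $M_p/C^p\to\infty$ for every $C>0$, and let $M(\rho)=\sup_{p\in\mathbb{N}} \ln_+(\rho^p/M_p)$ be its associated function. Let $B$ be a family of continuous functions on $\mathbb{R}^d$. Then the following are equivalent: (i) for every $h>0$ there exists $C>0$ such that $|f(x)|\le C e^{M(h|x|)}$ for all $x\in\mathbb{R}^d$ and $f\in B$; (ii) there exist a positive sequence $(r_p)$ monotonically increasing to infinity and $C>0$ such that $|f(x)|\le C e^{N_{r_p}(|x|)}$ for all $x\in\mathbb{R}^d$ and $f\in B$, where $N_{r_p}(\rho)=\sup_{p\in\mathbb{N}}\ln_+\big(\rho^p/(M_p\prod_{j=1}^p r_j)\big)$. -/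
open Filter Finset

/-- The associated function `M(ρ) = sup_p ln₊(ρ^p / M_p)`. -/
noncomputable def assocFn (M : ℕ → ℝ) (ρ : ℝ) : ℝ :=
  ⨆ p : ℕ, max (Real.log (ρ ^ p / M p)) 0

open Real

/-!
(ii) ⇒ (i): since `r_j → ∞`, `h⁻ᵖ ≤ A ∏_{j ≤ p} r_j` for some `A ≥ 1`, hence termwise
`N_r(ρ) ≤ ln A + M(hρ)`.

(i) ⇒ (ii): let `C_k` be the constant for `h = 1/(2(k+1))` and `C_k ≤ 2^{m_k}`. Cut the radii into
blocks `[T_k, T_{k+1})` and the indices into blocks `(b_{k-1}, b_k]`, and let `r_j = k + 1` on the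
`k`-th index block, so that `∏_{j ≤ p} r_j ≤ (k+1)^p` for `p ≤ b_k`. For `ρ` in the `k`-th radius
block and `σ = ρ/(2(k+1))`, `T_k` is so large that the terms of `M(σ)` of index `≤ m_k` are dominated
by the one of index `m_k + 1`, and `b_k` is so large that those of index `> b_k` are at most `1`.
Every remaining index `m_k < p ≤ b_k` has `C_k σ^p/M_p ≤ 2^p σ^p/M_p ≤ ρ^p/(M_p ∏_{j≤p} r_j)`,
so `ln C_k + M(σ) ≤ N_r(ρ)`.
-/

def SuperGeometric (M : ℕ → ℝ) : Prop :=
  ∀ C : ℝ, 0 < C → Tendsto (fun p => M p / C ^ p) atTop atTop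

namespace SuperGeometric

variable {M : ℕ → ℝ}

theorem eventually_pow_le (hM : SuperGeometric M) (S : ℝ) : ∀ᶠ p in atTop, |S| ^ p ≤ M p := by
  filter_upwards [(hM (|S| + 1) (by positivity)).eventually_ge_atTop 1] with p hp
  rw [le_div_iff₀ (by positivity), one_mul] at hp
  exact (pow_le_pow_left₀ (abs_nonneg S) (by linarith) p).trans hp

theorem mono (hM : SuperGeometric M) {M' : ℕ → ℝ} (h : ∀ p, M p ≤ M' p) : SuperGeometric M' :=
  fun C hC =>
    tendsto_atTop_mono (fun p => div_le_div_of_nonneg_right (h p) (by positivity)) (hM C hC)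

end SuperGeometric

theorem eventually_pow_div_le_pow_div {M : ℕ → ℝ} (hMpos : ∀ p, 0 < M p) {p q : ℕ} (hpq : p < q) :
    ∀ᶠ σ in atTop, σ ^ p / M p ≤ σ ^ q / M q := by
  filter_upwards [eventually_ge_atTop 1, eventually_ge_atTop (M q / M p)] with σ hσ1 hσ
  rw [div_le_iff₀ (hMpos p)] at hσ
  rw [div_le_div_iff₀ (hMpos p) (hMpos q)]
  calc σ ^ p * M q ≤ σ ^ p * (σ * M p) := by gcongr
    _ = σ ^ (p + 1) * M p := by ring
    _ ≤ σ ^ q * M p := mul_le_mul_of_nonneg_right (pow_le_pow_right₀ hσ1 hpq) (hMpos p).le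

section assocFn

variable {M : ℕ → ℝ}

theorem assocFn_eq_iSup_posLog (M : ℕ → ℝ) (ρ : ℝ) :
    assocFn M ρ = ⨆ p, log⁺ (ρ ^ p / M p) := by
  simp only [assocFn, posLog, max_comm]

theorem bddAbove_range_posLog (hMpos : ∀ p, 0 < M p) (hM : SuperGeometric M) (ρ : ℝ) :
    BddAbove (Set.range fun p => log⁺ (ρ ^ p / M p)) := by
  refine Tendsto.bddAbove_range (a := 0) (tendsto_const_nhds.congr' ?_)
  filter_upwards [hM.eventually_pow_le ρ] with p hp
  rw [eq_comm, posLog_eq_zero_iff, abs_div, abs_pow, abs_of_pos (hMpos p)]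
  exact div_le_one_of_le₀ hp (hMpos p).le

theorem posLog_le_assocFn (hMpos : ∀ p, 0 < M p) (hM : SuperGeometric M) (ρ : ℝ) (p : ℕ) :
    log⁺ (ρ ^ p / M p) ≤ assocFn M ρ := by
  rw [assocFn_eq_iSup_posLog]
  exact le_ciSup (bddAbove_range_posLog hMpos hM ρ) p

theorem log_le_assocFn (hMpos : ∀ p, 0 < M p) (hM : SuperGeometric M) (ρ : ℝ) (p : ℕ) :
    log (ρ ^ p / M p) ≤ assocFn M ρ :=
  (le_max_right _ _).trans (posLog_le_assocFn hMpos hM ρ p)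

theorem assocFn_nonneg (hMpos : ∀ p, 0 < M p) (hM : SuperGeometric M) (ρ : ℝ) :
    0 ≤ assocFn M ρ :=
  posLog_nonneg.trans (posLog_le_assocFn hMpos hM ρ 0)

theorem assocFn_le_of_forall {ρ a : ℝ} (h : ∀ p, log⁺ (ρ ^ p / M p) ≤ a) : assocFn M ρ ≤ a := by
  rw [assocFn_eq_iSup_posLog]
  exact ciSup_le h

theorem assocFn_mono (hMpos : ∀ p, 0 < M p) (hM : SuperGeometric M) {σ ρ : ℝ} (hσ : 0 ≤ σ)
    (h : σ ≤ ρ) : assocFn M σ ≤ assocFn M ρ :=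
  assocFn_le_of_forall fun p =>
    (posLog_le_posLog (div_nonneg (pow_nonneg hσ p) (hMpos p).le)
      (div_le_div_of_nonneg_right (pow_le_pow_left₀ hσ h p) (hMpos p).le)).trans
      (posLog_le_assocFn hMpos hM ρ p)

theorem log_add_assocFn_le (hM0 : M 0 = 1) (hMpos : ∀ p, 0 < M p) {M' : ℕ → ℝ}
    (hM'pos : ∀ p, 0 < M' p) (hM' : SuperGeometric M') {a σ ρ : ℝ} (ha : 0 < a) (hσ : 0 ≤ σ)
    (h : ∀ p, ∃ q, a * (σ ^ p / M p) ≤ ρ ^ q / M' q) :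
    log a + assocFn M σ ≤ assocFn M' ρ := by
  rw [add_comm, ← le_sub_iff_add_le]
  refine assocFn_le_of_forall fun p => le_sub_iff_add_le.2 ?_
  obtain ⟨q, hq⟩ := h p
  rcases le_or_gt (σ ^ p / M p) 1 with hx | hx
  · -- the `p`-th term vanishes, and the index `0` (where `M 0 = 1`) gives `log a ≤ assocFn M' ρ`
    obtain ⟨q₀, hq₀⟩ := h 0
    rw [pow_zero, hM0, div_one, mul_one] at hq₀
    have hx0 : log⁺ (σ ^ p / M p) = 0 := by
      rwa [posLog_eq_zero_iff, abs_of_nonneg (div_nonneg (pow_nonneg hσ p) (hMpos p).le)]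
    rw [hx0, zero_add]
    exact (log_le_log ha hq₀).trans (log_le_assocFn hM'pos hM' ρ q₀)
  · rw [posLog_eq_log (by rw [abs_of_pos (by linarith)]; exact hx.le), add_comm,
      ← log_mul ha.ne' (by linarith)]
    exact (log_le_log (by nlinarith) hq).trans (log_le_assocFn hM'pos hM' ρ q)

theorem assocFn_le_log_add (hMpos : ∀ p, 0 < M p) (hM : SuperGeometric M) {M' : ℕ → ℝ}
    (hM'pos : ∀ p, 0 < M' p) {a σ ρ : ℝ} (ha : 1 ≤ a) (hρ : 0 ≤ ρ)
    (h : ∀ p, ρ ^ p / M' p ≤ a * (σ ^ p / M p)) :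
    assocFn M' ρ ≤ log a + assocFn M σ :=
  assocFn_le_of_forall fun p => calc
    log⁺ (ρ ^ p / M' p) ≤ log⁺ (a * (σ ^ p / M p)) :=
      posLog_le_posLog (div_nonneg (pow_nonneg hρ p) (hM'pos p).le) (h p)
    _ ≤ log⁺ a + log⁺ (σ ^ p / M p) := posLog_mul
    _ ≤ log a + assocFn M σ := by
      rw [posLog_eq_log (by rwa [abs_of_nonneg (by linarith)])]
      linarith [posLog_le_assocFn hMpos hM σ p]

end assocFn

theorem exists_pow_le_mul_prod_Icc {r : ℕ → ℝ} (hrpos : ∀ j, 0 < r j)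
    (hr : Tendsto r atTop atTop) {t : ℝ} (ht : 0 ≤ t) :
    ∃ A, 1 ≤ A ∧ ∀ p, t ^ p ≤ A * ∏ j ∈ Icc 1 p, r j := by
  obtain ⟨J, hJ⟩ := eventually_atTop.1 (hr.eventually_ge_atTop t)
  have hR : ∀ p, 0 < ∏ j ∈ Icc 1 p, r j := fun p => prod_pos fun j _ => hrpos j
  have hterm : ∀ p, 0 ≤ t ^ p / ∏ j ∈ Icc 1 p, r j := fun p => div_nonneg (pow_nonneg ht p) (hR p).le
  set A := 1 + ∑ p ∈ range (J + 1), t ^ p / ∏ j ∈ Icc 1 p, r j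
  have hA : ∀ p ≤ J, t ^ p ≤ A * ∏ j ∈ Icc 1 p, r j := by
    intro p hp
    rw [← div_le_iff₀ (hR p)]
    have := single_le_sum (fun i _ => hterm i) (mem_range.2 (Nat.lt_succ_of_le hp))
    linarith
  refine ⟨A, le_add_of_nonneg_right (sum_nonneg fun p _ => hterm p), fun p => ?_⟩
  rcases le_total p J with hp | hp
  · exact hA p hp
  induction p, hp using Nat.le_induction with
  | base => exact hA J le_rfl
  | succ p hJp ih =>
    rw [prod_Icc_succ_top (by omega), pow_succ, ← mul_assoc]
    exact mul_le_mul ih (hJ _ (by omega)) ht (by linarith [pow_nonneg ht p])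

theorem exists_assocFn_mul_prod_le {M : ℕ → ℝ} (hMpos : ∀ p, 0 < M p) (hM : SuperGeometric M)
    {r : ℕ → ℝ} (hrpos : ∀ j, 0 < r j) (hr : Tendsto r atTop atTop) {h : ℝ} (hh : 0 < h) :
    ∃ A, 1 ≤ A ∧ ∀ ρ, 0 ≤ ρ →
      assocFn (fun p => M p * ∏ j ∈ Icc 1 p, r j) ρ ≤ log A + assocFn M (h * ρ) := by
  obtain ⟨A, hA1, hA⟩ := exists_pow_le_mul_prod_Icc hrpos hr (inv_nonneg.2 hh.le)
  have hR : ∀ p, 0 < ∏ j ∈ Icc 1 p, r j := fun p => prod_pos fun j _ => hrpos j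
  refine ⟨A, hA1, fun ρ hρ => assocFn_le_log_add hMpos hM (fun p => mul_pos (hMpos p) (hR p))
    hA1 hρ fun p => ?_⟩
  rw [div_le_iff₀ (mul_pos (hMpos p) (hR p))]
  calc ρ ^ p = h⁻¹ ^ p * (h * ρ) ^ p := by
        rw [← mul_pow, ← mul_assoc, inv_mul_cancel₀ hh.ne', one_mul]
    _ ≤ A * (∏ j ∈ Icc 1 p, r j) * (h * ρ) ^ p :=
        mul_le_mul_of_nonneg_right (hA p) (pow_nonneg (by positivity) p)
    _ = A * ((h * ρ) ^ p / M p) * (M p * ∏ j ∈ Icc 1 p, r j) := by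
        field_simp [(hMpos p).ne']

-- For strictly monotone `b`, `blockSeq b j = k + 1` exactly when `b (k - 1) < j ≤ b k`.
def blockSeq (b : ℕ → ℕ) (j : ℕ) : ℝ := 1 + #{k ∈ range j | b k < j}

section blockSeq

variable {b : ℕ → ℕ}

theorem one_le_blockSeq (b : ℕ → ℕ) (j : ℕ) : 1 ≤ blockSeq b j :=
  le_add_of_nonneg_right (Nat.cast_nonneg _)

theorem blockSeq_pos (b : ℕ → ℕ) (j : ℕ) : 0 < blockSeq b j :=
  one_pos.trans_le (one_le_blockSeq b j)

theorem monotone_blockSeq (b : ℕ → ℕ) : Monotone (blockSeq b) := by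
  intro j j' hj
  have : #{k ∈ range j | b k < j} ≤ #{k ∈ range j' | b k < j'} :=
    card_le_card fun k hk => by
      simp only [mem_filter, mem_range] at hk ⊢
      omega
  unfold blockSeq
  gcongr

theorem tendsto_blockSeq (hb : StrictMono b) : Tendsto (blockSeq b) atTop atTop := by
  refine tendsto_atTop_atTop.2 fun A => ⟨b ⌈A⌉₊ + 1, fun j hj => ?_⟩
  have : ⌈A⌉₊ + 1 ≤ #{k ∈ range j | b k < j} := by
    simpa using card_le_card (s := range (⌈A⌉₊ + 1)) fun k hk => by
      simp only [mem_filter, mem_range] at hk ⊢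
      have := hb.monotone (Nat.lt_succ_iff.1 hk)
      have : k ≤ b k := hb.le_apply
      omega
  have hA := Nat.le_ceil A
  have hcast : ((⌈A⌉₊ + 1 : ℕ) : ℝ) ≤ #{k ∈ range j | b k < j} := by exact_mod_cast this
  unfold blockSeq
  push_cast at hcast
  linarith

theorem blockSeq_le (hb : StrictMono b) {j k : ℕ} (hj : j ≤ b k) : blockSeq b j ≤ k + 1 := by
  have : #{x ∈ range j | b x < j} ≤ k := by
    simpa using card_le_card (t := range k) fun x hx => by
      simp only [mem_filter, mem_range] at hx ⊢
      exact hb.lt_iff_lt.1 (by omega)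
  unfold blockSeq
  have hcast : (#{x ∈ range j | b x < j} : ℝ) ≤ k := by exact_mod_cast this
  linarith

theorem one_le_prod_blockSeq (b : ℕ → ℕ) (p : ℕ) : 1 ≤ ∏ j ∈ Icc 1 p, blockSeq b j :=
  one_le_prod fun j _ => one_le_blockSeq b j

theorem prod_blockSeq_le (hb : StrictMono b) {k p : ℕ} (hp : p ≤ b k) :
    ∏ j ∈ Icc 1 p, blockSeq b j ≤ (k + 1) ^ p :=
  calc ∏ j ∈ Icc 1 p, blockSeq b j ≤ ∏ _j ∈ Icc 1 p, ((k : ℝ) + 1) :=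
        prod_le_prod (fun j _ => (blockSeq_pos b j).le)
          fun j hj => blockSeq_le hb ((mem_Icc.1 hj).2.trans hp)
    _ = (k + 1) ^ p := by simp

end blockSeq

theorem log_add_assocFn_le_blockSeq {M : ℕ → ℝ} (hMpos : ∀ p, 0 < M p) (hM0 : M 0 = 1)
    (hM : SuperGeometric M) {b : ℕ → ℕ} (hb : StrictMono b) {k m : ℕ} {a σ : ℝ} (ha0 : 0 < a)
    (ha : a ≤ 2 ^ m) (hmb : m < b k) (hσ : 0 ≤ σ)
    (hlow : ∀ p ≤ m, σ ^ p / M p ≤ σ ^ (m + 1) / M (m + 1))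
    (hhigh : ∀ p, b k < p → σ ^ p ≤ M p) :
    log a + assocFn M σ ≤
      assocFn (fun p => M p * ∏ j ∈ Icc 1 p, blockSeq b j) (2 * (k + 1) * σ) := by
  have hM'pos : ∀ p, 0 < M p * ∏ j ∈ Icc 1 p, blockSeq b j := fun p =>
    mul_pos (hMpos p) (one_pos.trans_le (one_le_prod_blockSeq b p))
  have hM' : SuperGeometric fun p => M p * ∏ j ∈ Icc 1 p, blockSeq b j :=
    hM.mono fun p => le_mul_of_one_le_right (hMpos p).le (one_le_prod_blockSeq b p)
  have hblock : ∀ q, m < q → q ≤ b k →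
      a * (σ ^ q / M q) ≤ (2 * (k + 1) * σ) ^ q / (M q * ∏ j ∈ Icc 1 q, blockSeq b j) := by
    intro q hmq hqb
    have hR : a * ∏ j ∈ Icc 1 q, blockSeq b j ≤ (2 * (k + 1)) ^ q := by
      rw [mul_pow]
      exact mul_le_mul (ha.trans (pow_le_pow_right₀ one_le_two hmq.le)) (prod_blockSeq_le hb hqb)
        (zero_le_one.trans (one_le_prod_blockSeq b q)) (by positivity)
    rw [le_div_iff₀ (hM'pos q), mul_pow]
    calc a * (σ ^ q / M q) * (M q * ∏ j ∈ Icc 1 q, blockSeq b j)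
        = a * (∏ j ∈ Icc 1 q, blockSeq b j) * σ ^ q := by field_simp [(hMpos q).ne']
      _ ≤ (2 * (k + 1)) ^ q * σ ^ q := mul_le_mul_of_nonneg_right hR (pow_nonneg hσ q)
  have hdom : ∀ p, p ≤ m ∨ b k < p → σ ^ p / M p ≤ σ ^ (m + 1) / M (m + 1) := by
    rintro p (hp | hp)
    · exact hlow p hp
    · calc σ ^ p / M p ≤ σ ^ 0 / M 0 := by
            rw [pow_zero, hM0, div_one]
            exact div_le_one_of_le₀ (hhigh p hp) (hMpos p).le
        _ ≤ σ ^ (m + 1) / M (m + 1) := hlow 0 m.zero_le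
  refine log_add_assocFn_le hM0 hMpos hM'pos hM' ha0 hσ fun p => ?_
  by_cases hp : m < p ∧ p ≤ b k
  · exact ⟨p, hblock p hp.1 hp.2⟩
  · exact ⟨m + 1, (mul_le_mul_of_nonneg_left (hdom p (by omega)) ha0.le).trans
      (hblock (m + 1) m.lt_succ_self hmb)⟩

theorem exists_strictMono_gt (P : ℕ → ℕ) : ∃ b : ℕ → ℕ, StrictMono b ∧ ∀ k, P k < b k := by
  refine ⟨fun k => ∑ j ∈ range (k + 1), (P j + 1), strictMono_nat_of_lt_succ fun k => ?_,
    fun k => ?_⟩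
  · simp only [sum_range_succ _ (k + 1)]
    omega
  · exact single_le_sum (f := fun j => P j + 1) (fun j _ => Nat.zero_le _) (self_mem_range_succ k)

theorem exists_le_lt_succ {T : ℕ → ℝ} {x : ℝ} (h0 : T 0 ≤ x) (hx : ∃ n, x < T n) :
    ∃ k, T k ≤ x ∧ x < T (k + 1) := by
  classical
  have hpos : Nat.find hx ≠ 0 := fun h => (Nat.find_spec hx).not_ge (h ▸ h0)
  obtain ⟨k, hk⟩ := Nat.exists_eq_succ_of_ne_zero hpos
  refine ⟨k, not_lt.1 (Nat.find_min hx (by omega)), ?_⟩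
  rw [← Nat.succ_eq_add_one, ← hk]
  exact Nat.find_spec hx

theorem exists_assocFn_le_assocFn_mul_prod {M : ℕ → ℝ} (hMpos : ∀ p, 0 < M p) (hM0 : M 0 = 1)
    (hM : SuperGeometric M) (c : ℕ → ℝ) :
    ∃ r : ℕ → ℝ, (∀ p, 0 < r p) ∧ Monotone r ∧ Tendsto r atTop atTop ∧ ∃ K, ∀ ρ, 0 ≤ ρ →
      ∃ k : ℕ, c k + assocFn M ((2 * ((k : ℝ) + 1))⁻¹ * ρ) ≤
        assocFn (fun p => M p * ∏ j ∈ Icc 1 p, r j) ρ + K := by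
  choose m hm using fun k => pow_unbounded_of_one_lt (exp (c k)) one_lt_two
  choose s hs using fun k => eventually_atTop.1 <|
    (eventually_all_finite (Set.finite_le_nat (m k))).2 fun p hp =>
      eventually_pow_div_le_pow_div hMpos (Nat.lt_succ_of_le hp)
  set T : ℕ → ℝ := fun k => max (2 * (k + 1) * s k) k
  have hT : ∀ x, ∃ n, x < T n := fun x =>
    (exists_nat_gt x).imp fun n hn => hn.trans_le (le_max_right _ _)
  choose P hP using fun k => eventually_atTop.1 (hM.eventually_pow_le (T (k + 1)))
  obtain ⟨b, hb, hbP⟩ := exists_strictMono_gt fun k => P k + m k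
  have hN : ∀ ρ, 0 ≤ assocFn (fun p => M p * ∏ j ∈ Icc 1 p, blockSeq b j) ρ :=
    assocFn_nonneg (fun p => mul_pos (hMpos p) (one_pos.trans_le (one_le_prod_blockSeq b p)))
      (hM.mono fun p => le_mul_of_one_le_right (hMpos p).le (one_le_prod_blockSeq b p))
  refine ⟨blockSeq b, blockSeq_pos b, monotone_blockSeq b, tendsto_blockSeq hb,
    max (c 0 + assocFn M (T 0)) 0, fun ρ hρ => ?_⟩
  rcases lt_or_ge ρ (T 0) with hρT | hρT
  · refine ⟨0, ?_⟩
    have hσT : (2 * (((0 : ℕ) : ℝ) + 1))⁻¹ * ρ ≤ T 0 := by norm_num; linarith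
    linarith [assocFn_mono hMpos hM (by positivity) hσT, le_max_left (c 0 + assocFn M (T 0)) 0,
      hN ρ]
  obtain ⟨k, hkρ, hρk⟩ := exists_le_lt_succ hρT (hT ρ)
  refine ⟨k, ?_⟩
  set σ := (2 * ((k : ℝ) + 1))⁻¹ * ρ
  have hσ : 0 ≤ σ := by positivity
  have hρσ : 2 * ((k : ℝ) + 1) * σ = ρ := mul_inv_cancel_left₀ (by positivity) ρ
  have hσρ : σ ≤ ρ := by nlinarith [(k.cast_nonneg : (0 : ℝ) ≤ k)]
  have hsσ : s k ≤ σ :=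
    le_of_mul_le_mul_left ((le_max_left _ _).trans (hkρ.trans hρσ.ge)) (by positivity)
  have hhigh : ∀ p, b k < p → σ ^ p ≤ M p := fun p hp =>
    (pow_le_pow_left₀ hσ ((hσρ.trans hρk.le).trans (le_abs_self _)) p).trans
      (hP k p (by linarith [hbP k]))
  have := log_add_assocFn_le_blockSeq hMpos hM0 hM hb (exp_pos (c k)) (hm k).le
    (by linarith [hbP k]) hσ (hs k σ hsσ) hhigh
  rw [log_exp, hρσ] at this
  linarith [le_max_right (c 0 + assocFn M (T 0)) 0]

theorem stmt10_general (d : ℕ) (M : ℕ → ℝ) (hMpos : ∀ p, 0 < M p) (hM0 : M 0 = 1)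
    (hMgrow : ∀ C : ℝ, 0 < C → Tendsto (fun p : ℕ => M p / C ^ p) atTop atTop)
    (B : Set (EuclideanSpace ℝ (Fin d) → ℂ)) :
    (∀ h : ℝ, 0 < h → ∃ C : ℝ, 0 < C ∧ ∀ f ∈ B, ∀ x,
        ‖f x‖ ≤ C * Real.exp (assocFn M (h * ‖x‖))) ↔
      (∃ r : ℕ → ℝ, (∀ p, 0 < r p) ∧ Monotone r ∧ Tendsto r atTop atTop ∧
        ∃ C : ℝ, 0 < C ∧ ∀ f ∈ B, ∀ x,
          ‖f x‖ ≤
            C * Real.exp (assocFn (fun p => M p * ∏ j ∈ Finset.Icc 1 p, r j) ‖x‖)) := by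
  constructor
  · intro H
    choose C hCpos hC using fun k : ℕ => H (2 * ((k : ℝ) + 1))⁻¹ (by positivity)
    obtain ⟨r, hrpos, hrmono, hr, K, hK⟩ :=
      exists_assocFn_le_assocFn_mul_prod hMpos hM0 hMgrow fun k => log (C k)
    refine ⟨r, hrpos, hrmono, hr, exp K, exp_pos K, fun f hf x => ?_⟩
    obtain ⟨k, hk⟩ := hK ‖x‖ (norm_nonneg x)
    calc ‖f x‖ ≤ C k * exp (assocFn M ((2 * ((k : ℝ) + 1))⁻¹ * ‖x‖)) := hC k f hf x
      _ = exp (log (C k) + assocFn M ((2 * ((k : ℝ) + 1))⁻¹ * ‖x‖)) := by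
          rw [exp_add, exp_log (hCpos k)]
      _ ≤ exp K * exp (assocFn (fun p => M p * ∏ j ∈ Icc 1 p, r j) ‖x‖) := by
          rw [← exp_add, add_comm K]
          exact exp_le_exp.2 hk
  · rintro ⟨r, hrpos, -, hr, C, hCpos, hC⟩ h hh
    obtain ⟨A, hA, hAN⟩ := exists_assocFn_mul_prod_le hMpos hMgrow hrpos hr hh
    refine ⟨C * A, by positivity, fun f hf x => ?_⟩
    calc ‖f x‖ ≤ C * exp (assocFn (fun p => M p * ∏ j ∈ Icc 1 p, r j) ‖x‖) := hC f hf x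
      _ ≤ C * exp (log A + assocFn M (h * ‖x‖)) := by
          gcongr
          exact hAN ‖x‖ (norm_nonneg x)
      _ = C * A * exp (assocFn M (h * ‖x‖)) := by
          rw [exp_add, exp_log (by linarith)]
          ring

/-- For `M_p` positive, `M_0 = 1`, log-convex, with `M_p/C^p → ∞` for every
`C > 0`, and a family `B` of continuous functions on `ℝ^d`, the following are equivalent:
(i) for every `h > 0` there is `C > 0` with `|f(x)| ≤ C e^{M(h|x|)}` for all `x` and
`f ∈ B`; (ii) there are a positive sequence `(r_p)` increasing monotonically to infinity
and `C > 0` with `|f(x)| ≤ C e^{N_{r_p}(|x|)}` for all `x` and `f ∈ B`, where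
`N_{r_p}(ρ) = sup_p ln₊(ρ^p / (M_p ∏_{j=1}^p r_j))`. -/
theorem stmt10 (d : ℕ) (M : ℕ → ℝ) (hMpos : ∀ p, 0 < M p) (hM0 : M 0 = 1)
    (hM1 : ∀ p : ℕ, 1 ≤ p → (M p) ^ 2 ≤ M (p - 1) * M (p + 1))
    (hMgrow : ∀ C : ℝ, 0 < C → Tendsto (fun p : ℕ => M p / C ^ p) atTop atTop)
    (B : Set (EuclideanSpace ℝ (Fin d) → ℂ)) (hB : ∀ f ∈ B, Continuous f) :
    (∀ h : ℝ, 0 < h → ∃ C : ℝ, 0 < C ∧ ∀ f ∈ B, ∀ x,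
        ‖f x‖ ≤ C * Real.exp (assocFn M (h * ‖x‖))) ↔
      (∃ r : ℕ → ℝ, (∀ p, 0 < r p) ∧ Monotone r ∧ Tendsto r atTop atTop ∧
        ∃ C : ℝ, 0 < C ∧ ∀ f ∈ B, ∀ x,
          ‖f x‖ ≤
            C * Real.exp (assocFn (fun p => M p * ∏ j ∈ Finset.Icc 1 p, r j) ‖x‖)) :=
  stmt10_general d M hMpos hM0 hMgrow B
end

section
/- Let $M_p$ satisfy (M.1) and $M_p/C^p\to\infty$ for all $C>0$, with associated function $M(\rho)=\sup_p \ln_+(\rho^p/M_p)$. For every sequence $(r_p)$ of positive numbers monotonically increasing to infinity and every $k>0$, there exists $\rho_0>0$ such that $N_{r_p}(\rho)\le M(k\rho)$ for all $\rho>\rho_0$, where $N_{r_p}(\rho)=\sup_p \ln_+\big(\rho^p/(M_p\prod_{j=1}^p r_j)\big)$. -/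
open Filter Finset

/-! Since `k r_j → ∞`, the weights `k^p ∏_{j ≤ p} r_j` tend to infinity, so from some index `p₁` on
each term of `N_{r_p}(ρ)` is dominated by the term of `M(kρ)` with the same index. The finitely
many terms with `p < p₁` grow like `ρ^p`, hence for large `ρ` are dominated by the single term
`(kρ)^{p₁} / M_{p₁}`. -/

theorem tendsto_prod_Icc_atTop {f : ℕ → ℝ} (hpos : ∀ j, 0 < f j)
    (hf : Tendsto f atTop atTop) : Tendsto (fun p => ∏ j ∈ Icc 1 p, f j) atTop atTop := by
  obtain ⟨j₀, hj₀⟩ := eventually_atTop.mp (hf.eventually_ge_atTop 2)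
  refine (tendsto_add_atTop_iff_nat j₀).mp (tendsto_atTop_of_geom_le ?_ one_lt_two fun n => ?_)
  · exact prod_pos fun j _ => hpos j
  · rw [show n + 1 + j₀ = n + j₀ + 1 by omega, prod_Icc_succ_top (by omega), mul_comm]
    exact mul_le_mul_of_nonneg_left (hj₀ _ (by omega)) (prod_pos fun j _ => hpos j).le

theorem eventually_pow_le_mul_pow {p q : ℕ} (hpq : p < q) {b : ℝ} (hb : 0 < b) :
    ∀ᶠ ρ : ℝ in atTop, ρ ^ p ≤ b * ρ ^ q := by
  filter_upwards [(Asymptotics.isLittleO_pow_pow_atTop_of_lt hpq).bound hb,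
    eventually_ge_atTop 0] with ρ hbound hρ
  simpa [abs_of_nonneg, hρ, pow_nonneg] using hbound

theorem bddAbove_range_assocFn {M : ℕ → ℝ} {σ : ℝ} (hσ : 0 < σ)
    (hM : Tendsto (fun p => M p / σ ^ p) atTop atTop) :
    BddAbove (Set.range fun p => max (Real.log (σ ^ p / M p)) 0) := by
  have hzero : (fun p => max (Real.log (σ ^ p / M p)) 0) =ᶠ[atTop] fun _ => 0 := by
    filter_upwards [hM.eventually_ge_atTop 1] with p hp
    have hσp := pow_pos hσ p
    rw [le_div_iff₀ hσp, one_mul] at hp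
    have hratio : σ ^ p / M p ≤ 1 := (div_le_one (hσp.trans_le hp)).mpr hp
    exact max_eq_right (Real.log_nonpos (div_nonneg hσp.le (hσp.le.trans hp)) hratio)
  exact (tendsto_const_nhds.congr' hzero.symm).bddAbove_range

theorem assocFn_le_assocFn {N M : ℕ → ℝ} {ρ σ : ℝ} (hN : ∀ p, 0 < N p) (hρ : 0 < ρ)
    (hbdd : BddAbove (Set.range fun p => max (Real.log (σ ^ p / M p)) 0))
    (h : ∀ p, ∃ q, ρ ^ p / N p ≤ σ ^ q / M q) : assocFn N ρ ≤ assocFn M σ := by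
  refine ciSup_le fun p => ?_
  obtain ⟨q, hq⟩ := h p
  refine le_trans ?_ (le_ciSup hbdd q)
  exact max_le_max (Real.log_le_log (div_pos (pow_pos hρ p) (hN p)) hq) le_rfl

theorem stmt11_general (M : ℕ → ℝ) (hMpos : ∀ p, 0 < M p)
    (hMgrow : ∀ C : ℝ, 0 < C → Tendsto (fun p : ℕ => M p / C ^ p) atTop atTop)
    (r : ℕ → ℝ) (hrpos : ∀ p, 0 < r p)
    (hrtop : Tendsto r atTop atTop) (k : ℝ) (hk : 0 < k) :
    ∃ ρ₀ : ℝ, 0 < ρ₀ ∧ ∀ ρ : ℝ, ρ₀ < ρ →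
      assocFn (fun p => M p * ∏ j ∈ Finset.Icc 1 p, r j) ρ ≤ assocFn M (k * ρ) := by
  have hPpos : ∀ p, 0 < ∏ j ∈ Icc 1 p, r j := fun p => prod_pos fun j _ => hrpos j
  have hNpos : ∀ p, 0 < M p * ∏ j ∈ Icc 1 p, r j := fun p => mul_pos (hMpos p) (hPpos p)
  have hweight : Tendsto (fun p => k ^ p * ∏ j ∈ Icc 1 p, r j) atTop atTop := by
    simpa [prod_mul_distrib] using
      tendsto_prod_Icc_atTop (fun j => mul_pos hk (hrpos j)) (hrtop.const_mul_atTop hk)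
  obtain ⟨p₁, hp₁⟩ := eventually_atTop.mp (hweight.eventually_ge_atTop 1)
  have hsmall : ∀ᶠ ρ in atTop, ∀ p ∈ range p₁,
      ρ ^ p / (M p * ∏ j ∈ Icc 1 p, r j) ≤ (k * ρ) ^ p₁ / M p₁ := by
    refine (eventually_all_finset _).mpr fun p hp => ?_
    filter_upwards [eventually_pow_le_mul_pow (mem_range.mp hp)
      (div_pos (mul_pos (hNpos p) (pow_pos hk p₁)) (hMpos p₁))] with ρ hρ
    rw [div_le_iff₀ (hNpos p)]
    exact hρ.trans_eq (by rw [mul_pow]; ring)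
  obtain ⟨ρ₀, hρ₀⟩ := eventually_atTop.mp hsmall
  refine ⟨max ρ₀ 1, by positivity, fun ρ hρ => ?_⟩
  have hρpos : 0 < ρ := (zero_lt_one.trans_le (le_max_right _ _)).trans hρ
  refine assocFn_le_assocFn hNpos hρpos
    (bddAbove_range_assocFn (by positivity) (hMgrow _ (by positivity))) fun p => ?_
  rcases lt_or_ge p p₁ with hp | hp
  · exact ⟨p₁, hρ₀ ρ (le_of_max_le_left hρ.le) p (mem_range.mpr hp)⟩
  · refine ⟨p, ?_⟩
    calc ρ ^ p / (M p * ∏ j ∈ Icc 1 p, r j)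
        ≤ ρ ^ p / (M p * ∏ j ∈ Icc 1 p, r j) * (k ^ p * ∏ j ∈ Icc 1 p, r j) :=
          le_mul_of_one_le_right (div_pos (pow_pos hρpos p) (hNpos p)).le (hp₁ p hp)
      _ = (k * ρ) ^ p / M p := by
          field_simp [(hPpos p).ne', (hMpos p).ne']
          ring

/-- For `M_p` positive, `M_0 = 1`, log-convex, with `M_p/C^p → ∞` for all
`C > 0`, and any positive sequence `(r_p)` monotonically increasing to infinity and any
`k > 0`, there exists `ρ₀ > 0` such that `N_{r_p}(ρ) ≤ M(kρ)` for all `ρ > ρ₀`, where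
`N_{r_p}(ρ) = sup_p ln₊(ρ^p/(M_p ∏_{j=1}^p r_j))`. -/
theorem stmt11 (M : ℕ → ℝ) (hMpos : ∀ p, 0 < M p) (hM0 : M 0 = 1)
    (hM1 : ∀ p : ℕ, 1 ≤ p → (M p) ^ 2 ≤ M (p - 1) * M (p + 1))
    (hMgrow : ∀ C : ℝ, 0 < C → Tendsto (fun p : ℕ => M p / C ^ p) atTop atTop)
    (r : ℕ → ℝ) (hrpos : ∀ p, 0 < r p) (hrmono : Monotone r)
    (hrtop : Tendsto r atTop atTop) (k : ℝ) (hk : 0 < k) :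
    ∃ ρ₀ : ℝ, 0 < ρ₀ ∧ ∀ ρ : ℝ, ρ₀ < ρ →
      assocFn (fun p => M p * ∏ j ∈ Finset.Icc 1 p, r j) ρ ≤ assocFn M (k * ρ) :=
  stmt11_general M hMpos hMgrow r hrpos hrtop k hk
end

section
/- Let $F$ be a Montel locally convex space, $t_0\in\mathbb{R}$, $\varepsilon>0$, and let $\mathbf{F}:[t_0,t_0+\varepsilon]\to F$ be continuous. Assume that for every continuous linear functional $f'\in F'$, the scalar function $t\mapsto\langle f',\mathbf{F}(t)\rangle$ has a right derivative at $t_0$. Then $\mathbf{F}$ has a right derivative at $t_0$ in $F$ (i.e., $(t-t_0)^{-1}(\mathbf{F}(t)-\mathbf{F}(t_0))$ converges in $F$ as $t\to t_0^+$), and this derivative is the unique element $g\in F$ with $\langle f',g\rangle=\frac{d^+}{dt}\langle f',\mathbf{F}(t)\rangle\big|_{t=t_0}$ for all $f'\in F'$. -/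
/-!
The difference quotients `φ t = (t - t₀)⁻¹ • (Fmap t - Fmap t₀)` are weakly bounded on
`(t₀, t₀ + ε]`: each `f' ∘ φ` is continuous there and converges at `t₀⁺`. By Mackey's theorem
(for each continuous seminorm `p`, Banach–Steinhaus applied in the dual of the seminormed space
`(F, p)`) they are bounded, so their closure is compact since `F` is Montel. Every cluster point
of `φ` at `t₀⁺` pairs with each `f'` to the scalar right derivative; as continuous functionals
separate points, `φ` has a unique cluster point in a compact set, hence converges.
-/

open Filter Set Topology Bornology

section Mackey

variable {𝕜 : Type*} [RCLike 𝕜]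

theorem isBounded_of_forall_strongDual_isBounded {E : Type*} [SeminormedAddCommGroup E]
    [NormedSpace 𝕜 E] {S : Set E} (h : ∀ f : StrongDual 𝕜 E, IsBounded (f '' S)) :
    IsBounded S := by
  obtain ⟨C, hC⟩ := banach_steinhaus (g := fun x : S ↦ NormedSpace.inclusionInDoubleDualLi 𝕜 x.1)
    fun f ↦ by
      obtain ⟨C, hC⟩ := isBounded_iff_forall_norm_le.1 (h f)
      exact ⟨C, fun x ↦ hC _ (mem_image_of_mem f x.2)⟩
  refine isBounded_iff_forall_norm_le.2 ⟨C, fun x hx ↦ ?_⟩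
  simpa only [LinearIsometry.norm_map] using hC ⟨x, hx⟩

theorem Seminorm.bddAbove_image_of_forall_dual_isBounded {E : Type*} [AddCommGroup E]
    [Module 𝕜 E] (p : Seminorm 𝕜 E) {S : Set E}
    (h : ∀ f : Module.Dual 𝕜 E, (∃ C : NNReal, ∀ x, ‖f x‖ ≤ C * p x) →
      Bornology.IsBounded (f '' S)) :
    BddAbove (p '' S) := by
  let : SeminormedAddCommGroup E := p.toAddGroupSeminorm.toSeminormedAddCommGroup
  let : NormedSpace 𝕜 E := ⟨fun c x ↦ (map_smul_eq_mul p c x).le⟩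
  have hS : Bornology.IsBounded S :=
    isBounded_of_forall_strongDual_isBounded (𝕜 := 𝕜) fun f ↦ h f ⟨‖f‖₊, f.le_opNorm⟩
  obtain ⟨C, hC⟩ := isBounded_iff_forall_norm_le.1 hS
  exact ⟨C, forall_mem_image.2 hC⟩

theorem isVonNBounded_of_forall_strongDual_isBounded {F : Type*} [AddCommGroup F] [Module 𝕜 F]
    [TopologicalSpace F] [PolynormableSpace 𝕜 F] {S : Set F}
    (h : ∀ f : StrongDual 𝕜 F, IsBounded (f '' S)) : IsVonNBounded 𝕜 S := by
  have hF := PolynormableSpace.withSeminorms 𝕜 F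
  refine hF.isVonNBounded_iff_seminorm_bddAbove.2 fun p ↦
    p.1.bddAbove_image_of_forall_dual_isBounded fun f ⟨C, hC⟩ ↦ ?_
  have hf : Continuous f :=
    hF.continuous_normedSpace_rng 𝕜 f ⟨{p}, C, fun x ↦ by simpa [NNReal.smul_def] using hC x⟩
  exact h ⟨f, hf⟩

end Mackey

theorem isBounded_image_Ioc_of_tendsto_nhdsGT {f : ℝ → ℝ} {a b L : ℝ}
    (hf : ContinuousOn f (Ioc a b)) (hL : Tendsto f (𝓝[>] a) (𝓝 L)) :
    IsBounded (f '' Ioc a b) := by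
  rcases le_or_gt b a with hba | hab
  · simp [Ioc_eq_empty_of_le hba]
  have hcont : ContinuousOn (Function.update f a L) (Icc a b) := by
    intro x hx
    rcases eq_or_ne x a with rfl | hxa
    · rwa [continuousWithinAt_update_same, Icc_sdiff_left, nhdsWithin_Ioc_eq_nhdsGT hab]
    have hxa' : a < x := lt_of_le_of_ne hx.1 hxa.symm
    have hIoc : Ioc a b ∈ 𝓝[Icc a b] x :=
      mem_nhdsWithin.2 ⟨Ioi a, isOpen_Ioi, hxa', fun y hy ↦ ⟨hy.1, hy.2.2⟩⟩
    exact (continuousWithinAt_update_of_ne hxa).2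
      ((hf x ⟨hxa', hx.2⟩).mono_of_mem_nhdsWithin hIoc)
  refine (isCompact_Icc.image_of_continuousOn hcont).isBounded.subset ?_
  rintro _ ⟨t, ht, rfl⟩
  exact ⟨t, Ioc_subset_Icc_self ht, Function.update_of_ne ht.1.ne' _ _⟩

theorem exists_tendsto_of_eventually_mem_of_forall_dual_tendsto {R V ι : Type*} [Ring R]
    [TopologicalSpace R] [T2Space R] [AddCommGroup V] [Module R V] [TopologicalSpace V]
    [SeparatingDual R V] {l : Filter ι} [l.NeBot] {φ : ι → V} {K : Set V} (hK : IsCompact K)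
    (hφK : ∀ᶠ i in l, φ i ∈ K) {L : StrongDual R V → R}
    (hL : ∀ f : StrongDual R V, Tendsto (fun i ↦ f (φ i)) l (𝓝 (L f))) :
    ∃ g, Tendsto φ l (𝓝 g) ∧ ∀ f : StrongDual R V, f g = L f := by
  have hclu : ∀ x, MapClusterPt x l φ → ∀ f : StrongDual R V, f x = L f := fun x hx f ↦
    eq_of_nhds_neBot <| ((hx.map f.continuous.continuousAt tendsto_map).mono
      (by rw [map_map]; exact hL f))
  obtain ⟨g, -, hg⟩ := hK.exists_clusterPt (le_principal_iff.2 (mem_map.2 hφK))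
  refine ⟨g, hK.tendsto_nhds_of_unique_mapClusterPt hφK fun x _ hx ↦ ?_, hclu g hg⟩
  exact (SeparatingDual.eq_iff_forall_dual_eq (R := R)).2 fun f ↦ by rw [hclu x hx, hclu g hg]

theorem stmt12_general (F : Type*) [AddCommGroup F] [Module ℝ F] [TopologicalSpace F]
    [IsTopologicalAddGroup F] [ContinuousSMul ℝ F] [LocallyConvexSpace ℝ F] [T2Space F]
    (hMontel : ∀ s : Set F, Bornology.IsVonNBounded ℝ s → IsCompact (closure s))
    (t₀ ε : ℝ) (hε : 0 < ε) (Fmap : ℝ → F)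
    (hcont : ContinuousOn Fmap (Set.Icc t₀ (t₀ + ε)))
    (hscalar : ∀ f' : F →L[ℝ] ℝ, ∃ L : ℝ,
      HasDerivWithinAt (fun t => f' (Fmap t)) L (Set.Ici t₀) t₀) :
    ∃ g : F,
      Tendsto (fun t => (t - t₀)⁻¹ • (Fmap t - Fmap t₀)) (nhdsWithin t₀ (Set.Ioi t₀)) (nhds g) ∧
      (∀ f' : F →L[ℝ] ℝ, HasDerivWithinAt (fun t => f' (Fmap t)) (f' g) (Set.Ici t₀) t₀) ∧
      (∀ g' : F,
        (∀ f' : F →L[ℝ] ℝ, HasDerivWithinAt (fun t => f' (Fmap t)) (f' g') (Set.Ici t₀) t₀) →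
        g' = g) := by
  choose L hL using hscalar
  set φ : ℝ → F := fun t ↦ (t - t₀)⁻¹ • (Fmap t - Fmap t₀)
  have hslope (f' : F →L[ℝ] ℝ) : Tendsto (fun t ↦ f' (φ t)) (𝓝[>] t₀) (𝓝 (L f')) := by
    have := hasDerivWithinAt_iff_tendsto_slope.1 (hL f')
    rw [Ici_sdiff_left] at this
    refine this.congr fun t ↦ ?_
    simp [φ, slope_def_module]
  have hφ : ContinuousOn φ (Ioc t₀ (t₀ + ε)) :=
    ((continuousOn_id.sub continuousOn_const).inv₀ fun t ht ↦ sub_ne_zero.2 ht.1.ne').smul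
      ((hcont.mono Ioc_subset_Icc_self).sub continuousOn_const)
  set S := φ '' Ioc t₀ (t₀ + ε)
  have hS : IsVonNBounded ℝ S := isVonNBounded_of_forall_strongDual_isBounded fun f' ↦ by
    rw [← image_comp]
    exact isBounded_image_Ioc_of_tendsto_nhdsGT (f'.continuous.comp_continuousOn hφ) (hslope f')
  have hφS : ∀ᶠ t in 𝓝[>] t₀, φ t ∈ closure S := by
    filter_upwards [Ioc_mem_nhdsGT (by linarith : t₀ < t₀ + ε)] with t ht
    exact subset_closure (mem_image_of_mem φ ht)
  obtain ⟨g, hφg, hgL⟩ :=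
    exists_tendsto_of_eventually_mem_of_forall_dual_tendsto (hMontel S hS) hφS hslope
  have hderiv (f' : F →L[ℝ] ℝ) : HasDerivWithinAt (fun t ↦ f' (Fmap t)) (f' g) (Ici t₀) t₀ :=
    hgL f' ▸ hL f'
  refine ⟨g, hφg, hderiv, fun g' hg' ↦ (SeparatingDual.eq_iff_forall_dual_eq (R := ℝ)).2 ?_⟩
  exact fun f' ↦ (uniqueDiffWithinAt_Ici t₀).eq_deriv _ (hg' f') (hderiv f')

/-- Let `F` be a Montel locally convex space (barrelled, locally convex,
Hausdorff, with bounded sets relatively compact). If `Fmap : [t₀, t₀+ε] → F` is continuous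
and for every continuous linear functional `f'` the scalar function `t ↦ f'(Fmap t)` has a
right derivative at `t₀`, then `Fmap` has a right derivative `g` at `t₀` in `F`, the element
`g` being uniquely determined by `f'(g) = (d⁺/dt) f'(Fmap t)|_{t=t₀}` for all `f'`. -/
theorem stmt12 (F : Type*) [AddCommGroup F] [Module ℝ F] [TopologicalSpace F]
    [IsTopologicalAddGroup F] [ContinuousSMul ℝ F] [LocallyConvexSpace ℝ F] [T2Space F]
    [BarrelledSpace ℝ F]
    (hMontel : ∀ s : Set F, Bornology.IsVonNBounded ℝ s → IsCompact (closure s))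
    (t₀ ε : ℝ) (hε : 0 < ε) (Fmap : ℝ → F)
    (hcont : ContinuousOn Fmap (Set.Icc t₀ (t₀ + ε)))
    (hscalar : ∀ f' : F →L[ℝ] ℝ, ∃ L : ℝ,
      HasDerivWithinAt (fun t => f' (Fmap t)) L (Set.Ici t₀) t₀) :
    ∃ g : F,
      Tendsto (fun t => (t - t₀)⁻¹ • (Fmap t - Fmap t₀)) (nhdsWithin t₀ (Set.Ioi t₀)) (nhds g) ∧
      (∀ f' : F →L[ℝ] ℝ, HasDerivWithinAt (fun t => f' (Fmap t)) (f' g) (Set.Ici t₀) t₀) ∧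
      (∀ g' : F,
        (∀ f' : F →L[ℝ] ℝ, HasDerivWithinAt (fun t => f' (Fmap t)) (f' g') (Set.Ici t₀) t₀) →
        g' = g) :=
  stmt12_general F hMontel t₀ ε hε Fmap hcont hscalar
end

section
/- Let $a:\mathbb{R}^{2d}\to(0,\infty)$ be smooth and satisfy: for some $\rho_1\in(0,1]$, $h,C>0$ and a sequence $A_p$ (with $A_0=A_1=1$, (M.4), (M.3)'), $|D^\alpha a(w)|\le C h^{|\alpha|}A_{|\alpha|}\,a(w)\,\langle w\rangle^{-\rho_1|\alpha|}$ for all $\alpha,w$. Then for every fixed $s>1$ there exist $h',C'>0$ with $|D^\alpha (a(w)^{1/s})| \le C' h'^{|\alpha|}A_{|\alpha|}\, a(w)^{1/s}\,\langle w\rangle^{-\rho_1|\alpha|}$ for all $\alpha\in\mathbb{N}^{2d}$ and $w\in\mathbb{R}^{2d}$. -/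
/-- Directional derivative operator on functions. -/
noncomputable def dirDeriv {E F : Type*} [NormedAddCommGroup E] [NormedSpace ℝ E]
    [NormedAddCommGroup F] [NormedSpace ℝ F] (v : E) (f : E → F) : E → F :=
  fun x => fderiv ℝ f x v

/-- Multi-index partial derivative `∂^α f` on Euclidean `ℝ^m`. -/
noncomputable def multiDeriv {m : ℕ} {F : Type*} [NormedAddCommGroup F] [NormedSpace ℝ F]
    (α : Fin m → ℕ) (f : EuclideanSpace ℝ (Fin m) → F) : EuclideanSpace ℝ (Fin m) → F :=
  ((List.finRange m).foldr (fun i g => (dirDeriv (EuclideanSpace.single i 1))^[α i] ∘ g) id) f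

/-- Japanese bracket `⟨w⟩ = (1+|w|²)^{1/2}`. -/
noncomputable def jbr {m : ℕ} (w : EuclideanSpace ℝ (Fin m)) : ℝ :=
  Real.sqrt (1 + ‖w‖ ^ 2)


set_option maxHeartbeats 1000000

namespace S16
open Finset
variable {m : ℕ}
abbrev EE (m : ℕ) := EuclideanSpace ℝ (Fin m)
noncomputable abbrev ee (i : Fin m) : EE m := EuclideanSpace.single i 1

lemma dirDeriv_contDiff {f : EE m → ℝ} (hf : ContDiff ℝ (⊤ : ℕ∞) f) (v : EE m) :
    ContDiff ℝ (⊤ : ℕ∞) (dirDeriv v f) :=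
  (hf.fderiv_right (by simp)).clm_apply contDiff_const

lemma dirDeriv_sum {ι : Type*} (s : Finset ι) (F : ι → EE m → ℝ)
    (hF : ∀ b ∈ s, ContDiff ℝ (⊤ : ℕ∞) (F b)) (v : EE m) :
    dirDeriv v (fun x => ∑ b ∈ s, F b x) = fun x => ∑ b ∈ s, dirDeriv v (F b) x := by
  funext x
  show fderiv ℝ _ x v = _
  rw [fderiv_fun_sum (fun b hb => ((hF b hb).differentiable (by simp)).differentiableAt)]
  simp [dirDeriv]

lemma dirDeriv_const_mul (c : ℝ) {f : EE m → ℝ} (hf : ContDiff ℝ (⊤ : ℕ∞) f) (v : EE m) :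
    dirDeriv v (fun x => c * f x) = fun x => c * dirDeriv v f x := by
  funext x
  show fderiv ℝ _ x v = _
  rw [fderiv_const_mul ((hf.differentiable (by simp)).differentiableAt)]
  simp [dirDeriv]

lemma dirDeriv_mul {f g : EE m → ℝ} (hf : ContDiff ℝ (⊤ : ℕ∞) f) (hg : ContDiff ℝ (⊤ : ℕ∞) g) (v : EE m) :
    dirDeriv v (fun x => f x * g x)
      = fun x => f x * dirDeriv v g x + g x * dirDeriv v f x := by
  funext x
  show fderiv ℝ _ x v = _
  rw [fderiv_fun_mul ((hf.differentiable (by simp)).differentiableAt)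
    ((hg.differentiable (by simp)).differentiableAt)]
  simp [dirDeriv, smul_eq_mul]

lemma iter_contDiff (v : EE m) (k : ℕ) {f : EE m → ℝ} (hf : ContDiff ℝ (⊤ : ℕ∞) f) :
    ContDiff ℝ (⊤ : ℕ∞) ((dirDeriv v)^[k] f) := by
  induction k with
  | zero => simpa using hf
  | succ k IH => rw [Function.iterate_succ_apply']; exact dirDeriv_contDiff IH v

lemma iter_sum (v : EE m) (k : ℕ) {ι : Type*} (s : Finset ι) (F : ι → EE m → ℝ)
    (hF : ∀ b ∈ s, ContDiff ℝ (⊤ : ℕ∞) (F b)) :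
    (dirDeriv v)^[k] (fun x => ∑ b ∈ s, F b x)
      = fun x => ∑ b ∈ s, (dirDeriv v)^[k] (F b) x := by
  induction k with
  | zero => simp
  | succ k IH =>
    rw [Function.iterate_succ_apply', IH, dirDeriv_sum s _ (fun b hb => iter_contDiff v k (hF b hb))]
    simp [Function.iterate_succ_apply']

lemma iter_const_mul (v : EE m) (k : ℕ) (c : ℝ) {f : EE m → ℝ} (hf : ContDiff ℝ (⊤ : ℕ∞) f) :
    (dirDeriv v)^[k] (fun x => c * f x) = fun x => c * (dirDeriv v)^[k] f x := by
  induction k with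
  | zero => simp
  | succ k IH =>
    rw [Function.iterate_succ_apply', IH, dirDeriv_const_mul c (iter_contDiff v k hf)]
    simp [Function.iterate_succ_apply']


lemma pascal_shuffle (k : ℕ) (U W : ℕ → ℝ) :
    ∑ j ∈ range (k+2), (((k+1).choose j : ℕ) : ℝ) * (U j * W (k+1-j))
      = ∑ j ∈ range (k+1), ((k.choose j : ℕ) : ℝ) * (U j * W (k-j+1) + W (k-j) * U (j+1)) := by
  rw [Finset.sum_range_succ' (fun j => (((k+1).choose j : ℕ) : ℝ) * (U j * W (k+1-j))) (k+1)]
  have h1 : ∀ j ∈ range (k+1),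
      (((k+1).choose (j+1) : ℕ) : ℝ) * (U (j+1) * W (k+1-(j+1)))
        = ((k.choose j : ℕ) : ℝ) * (W (k-j) * U (j+1))
          + ((k.choose (j+1) : ℕ) : ℝ) * (U (j+1) * W (k+1-(j+1))) := by
    intro j hj
    rw [Nat.choose_succ_succ]
    have e : k + 1 - (j+1) = k - j := by omega
    rw [e]
    push_cast
    ring
  rw [Finset.sum_congr rfl h1, Finset.sum_add_distrib]
  have h2 : ∑ j ∈ range (k+1), ((k.choose (j+1) : ℕ) : ℝ) * (U (j+1) * W (k+1-(j+1)))
        + (((k+1).choose 0 : ℕ) : ℝ) * (U 0 * W (k+1-0))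
      = ∑ j ∈ range (k+1), ((k.choose j : ℕ) : ℝ) * (U j * W (k+1-j)) := by
    have h3 := Finset.sum_range_succ' (fun j => ((k.choose j : ℕ) : ℝ) * (U j * W (k+1-j))) (k+1)
    rw [Finset.sum_range_succ (fun j => ((k.choose j : ℕ) : ℝ) * (U j * W (k+1-j))) (k+1)] at h3
    simp only [Nat.choose_succ_self, Nat.cast_zero, zero_mul, add_zero,
      Nat.choose_zero_right, Nat.cast_one, one_mul] at h3 ⊢
    rw [← h3]
  rw [add_assoc, h2, ← Finset.sum_add_distrib]
  apply Finset.sum_congr rfl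
  intro j hj
  have hjk : j ≤ k := by simpa [Nat.lt_succ_iff] using hj
  have e1 : k + 1 - j = k - j + 1 := by omega
  rw [e1]
  ring


lemma iter_leibniz (v : EE m) (k : ℕ) {f g : EE m → ℝ}
    (hf : ContDiff ℝ (⊤ : ℕ∞) f) (hg : ContDiff ℝ (⊤ : ℕ∞) g) :
    (dirDeriv v)^[k] (fun x => f x * g x)
      = fun x => ∑ j ∈ range (k+1), ((k.choose j : ℕ) : ℝ) *
          ((dirDeriv v)^[j] f x * (dirDeriv v)^[k-j] g x) := by
  induction k with
  | zero => funext x; simp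
  | succ k IH =>
    rw [Function.iterate_succ_apply', IH]
    have hsm : ∀ j ∈ range (k+1), ContDiff ℝ (⊤ : ℕ∞) (fun x =>
        ((k.choose j : ℕ) : ℝ) * ((dirDeriv v)^[j] f x * (dirDeriv v)^[k-j] g x)) :=
      fun j _ => contDiff_const.mul ((iter_contDiff v j hf).mul (iter_contDiff v (k-j) hg))
    rw [dirDeriv_sum _ _ hsm v]
    funext x
    show ∑ j ∈ range (k+1), dirDeriv v (fun x =>
        ((k.choose j : ℕ) : ℝ) * ((dirDeriv v)^[j] f x * (dirDeriv v)^[k-j] g x)) x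
      = ∑ j ∈ range (k+1+1), (((k+1).choose j : ℕ) : ℝ) *
          ((dirDeriv v)^[j] f x * (dirDeriv v)^[k+1-j] g x)
    have hterm : ∀ j ∈ range (k+1), dirDeriv v (fun x =>
        ((k.choose j : ℕ) : ℝ) * ((dirDeriv v)^[j] f x * (dirDeriv v)^[k-j] g x)) x
        = ((k.choose j : ℕ) : ℝ) * ((dirDeriv v)^[j] f x * (dirDeriv v)^[k-j+1] g x
            + (dirDeriv v)^[k-j] g x * (dirDeriv v)^[j+1] f x) := by
      intro j hj
      rw [dirDeriv_const_mul _ ((iter_contDiff v j hf).mul (iter_contDiff v (k-j) hg)) v]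
      simp only []
      rw [dirDeriv_mul (iter_contDiff v j hf) (iter_contDiff v (k-j) hg) v]
      simp only [← Function.iterate_succ_apply' (dirDeriv v) j f,
        ← Function.iterate_succ_apply' (dirDeriv v) (k-j) g]
    rw [Finset.sum_congr rfl hterm]
    exact (pascal_shuffle k (fun j => (dirDeriv v)^[j] f x) (fun j => (dirDeriv v)^[j] g x)).symm


noncomputable def Dop (L : List (Fin m)) (α : Fin m → ℕ) (f : EE m → ℝ) : EE m → ℝ :=
  (L.foldr (fun i g => (dirDeriv (EuclideanSpace.single i 1))^[α i] ∘ g) id) f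

lemma multiDeriv_eq_Dop (α : Fin m → ℕ) (f : EE m → ℝ) :
    multiDeriv α f = Dop (List.finRange m) α f := rfl

lemma Dop_nil (α : Fin m → ℕ) (f : EE m → ℝ) : Dop [] α f = f := rfl

lemma Dop_cons (i : Fin m) (L : List (Fin m)) (α : Fin m → ℕ) (f : EE m → ℝ) :
    Dop (i :: L) α f = (dirDeriv (ee i))^[α i] (Dop L α f) := rfl

lemma Dop_contDiff (L : List (Fin m)) (α : Fin m → ℕ) {f : EE m → ℝ}
    (hf : ContDiff ℝ (⊤ : ℕ∞) f) : ContDiff ℝ (⊤ : ℕ∞) (Dop L α f) := by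
  induction L with
  | nil => exact hf
  | cons i L IH => rw [Dop_cons]; exact iter_contDiff _ _ IH

lemma Dop_congr (L : List (Fin m)) {α α' : Fin m → ℕ} (hc : ∀ i ∈ L, α i = α' i)
    (f : EE m → ℝ) : Dop L α f = Dop L α' f := by
  induction L with
  | nil => rfl
  | cons i L IH =>
    rw [Dop_cons, Dop_cons, hc i (List.mem_cons_self (a := i) (l := L)),
      IH (fun k hk => hc k (List.mem_cons_of_mem _ hk))]

lemma Dop_zero (L : List (Fin m)) {α : Fin m → ℕ} (h0 : ∀ i ∈ L, α i = 0)
    (f : EE m → ℝ) : Dop L α f = f := by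
  induction L with
  | nil => rfl
  | cons i L IH =>
    rw [Dop_cons, h0 i (List.mem_cons_self (a := i) (l := L)),
      IH (fun k hk => h0 k (List.mem_cons_of_mem _ hk))]
    rfl

lemma Dop_const_mul (L : List (Fin m)) (α : Fin m → ℕ) (c : ℝ) {f : EE m → ℝ}
    (hf : ContDiff ℝ (⊤ : ℕ∞) f) :
    Dop L α (fun x => c * f x) = fun x => c * Dop L α f x := by
  induction L with
  | nil => rfl
  | cons i L IH =>
    rw [Dop_cons, IH, iter_const_mul _ _ _ (Dop_contDiff L α hf), Dop_cons]

lemma Dop_peel (L : List (Fin m)) (hL : L.Pairwise (· < ·)) (i : Fin m) (hi : i ∈ L)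
    (γ : Fin m → ℕ) (hmax : ∀ k ∈ L, i < k → γ k = 0) (f : EE m → ℝ) :
    Dop L (Function.update γ i (γ i + 1)) f = Dop L γ (dirDeriv (ee i) f) := by
  induction L with
  | nil => cases hi
  | cons j L IH =>
    rcases eq_or_ne j i with rfl | hji
    · have hlt : ∀ k ∈ L, j < k := (List.pairwise_cons.mp hL).1
      have hz : ∀ k ∈ L, γ k = 0 := fun k hk => hmax k (List.mem_cons_of_mem _ hk) (hlt k hk)
      have hz' : ∀ k ∈ L, Function.update γ j (γ j + 1) k = 0 := by
        intro k hk
        rw [Function.update_of_ne (ne_of_gt (hlt k hk))]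
        exact hz k hk
      rw [Dop_cons, Dop_cons, Dop_zero _ hz', Dop_zero _ hz, Function.update_self]
      exact Function.iterate_succ_apply (dirDeriv (ee j)) (γ j) f
    · have hiL : i ∈ L := by
        rcases List.mem_cons.mp hi with h | h
        · exact absurd h.symm hji
        · exact h
      have h1 : Function.update γ i (γ i + 1) j = γ j := Function.update_of_ne hji _ _
      rw [Dop_cons, Dop_cons, h1,
        IH (List.pairwise_cons.mp hL).2 hiL
          (fun k hk hik => hmax k (List.mem_cons_of_mem _ hk) hik)]

def BB (L : List (Fin m)) (α : Fin m → ℕ) : Finset (Fin m → ℕ) :=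
  Fintype.piFinset fun i => Finset.Iic (if i ∈ L then α i else 0)

def cc (L : List (Fin m)) (α β : Fin m → ℕ) : ℕ :=
  (L.map fun i => (α i).choose (β i)).prod

lemma mem_BB {L : List (Fin m)} {α β : Fin m → ℕ} :
    β ∈ BB L α ↔ ∀ k, β k ≤ if k ∈ L then α k else 0 := by
  simp [BB, Fintype.mem_piFinset]

lemma BB_nil (α : Fin m → ℕ) : BB ([] : List (Fin m)) α = {0} := by
  ext β
  simp only [mem_BB, List.not_mem_nil, if_false, Nat.le_zero, Finset.mem_singleton]
  constructor
  · intro hβ; funext k; exact hβ k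
  · intro hβ k; rw [hβ]; rfl

lemma cc_congr (L : List (Fin m)) (α : Fin m → ℕ) {β β' : Fin m → ℕ}
    (hc : ∀ i ∈ L, β i = β' i) : cc L α β = cc L α β' := by
  unfold cc
  congr 1
  exact List.map_congr_left (fun i hi => by rw [hc i hi])

lemma Dop_leibniz (L : List (Fin m)) (hL : L.Nodup) (α : Fin m → ℕ) {f g : EE m → ℝ}
    (hf : ContDiff ℝ (⊤ : ℕ∞) f) (hg : ContDiff ℝ (⊤ : ℕ∞) g) :
    Dop L α (fun x => f x * g x)
      = fun x => ∑ β ∈ BB L α, (cc L α β : ℝ) * (Dop L β f x * Dop L (α - β) g x) := by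
  induction L with
  | nil =>
    funext x
    rw [Dop_nil, BB_nil, Finset.sum_singleton]
    simp [cc, Dop_nil]
  | cons i L IH =>
    obtain ⟨hiL, hLnd⟩ := List.nodup_cons.mp hL
    rw [Dop_cons, IH hLnd]
    have hsm : ∀ β ∈ BB L α, ContDiff ℝ (⊤ : ℕ∞) (fun x =>
        (cc L α β : ℝ) * (Dop L β f x * Dop L (α - β) g x)) :=
      fun β _ => contDiff_const.mul ((Dop_contDiff L β hf).mul (Dop_contDiff L (α - β) hg))
    rw [iter_sum (ee i) (α i) _ _ hsm]
    funext x
    show ∑ β ∈ BB L α, (dirDeriv (ee i))^[α i]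
        (fun y => (cc L α β : ℝ) * (Dop L β f y * Dop L (α - β) g y)) x = _
    have hterm : ∀ β ∈ BB L α, (dirDeriv (ee i))^[α i]
        (fun y => (cc L α β : ℝ) * (Dop L β f y * Dop L (α - β) g y)) x
        = ∑ j ∈ range (α i + 1),
            (cc (i :: L) α (Function.update β i j) : ℝ) *
              (Dop (i :: L) (Function.update β i j) f x *
                Dop (i :: L) (α - Function.update β i j) g x) := by
      intro β hβ
      rw [iter_const_mul _ _ _ ((Dop_contDiff L β hf).mul (Dop_contDiff L (α - β) hg))]
      simp only []
      rw [iter_leibniz (ee i) (α i) (Dop_contDiff L β hf) (Dop_contDiff L (α - β) hg),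
        Finset.mul_sum]
      apply Finset.sum_congr rfl
      intro j hj
      have hβi : β i = 0 := by
        have := mem_BB.mp hβ i
        simpa [hiL] using this
      -- identify the three pieces
      have e1 : Dop (i :: L) (Function.update β i j) f
          = (dirDeriv (ee i))^[j] (Dop L β f) := by
        rw [Dop_cons, Function.update_self,
          Dop_congr L (fun k hk => Function.update_of_ne (fun hki => hiL (by rw [← hki]; exact hk)) _ _) f]
      have e2 : Dop (i :: L) (α - Function.update β i j) g
          = (dirDeriv (ee i))^[α i - j] (Dop L (α - β) g) := by
        rw [Dop_cons]
        have h1 : (α - Function.update β i j) i = α i - j := by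
          simp [Function.update_self]
        have h2 : ∀ k ∈ L, (α - Function.update β i j) k = (α - β) k := by
          intro k hk
          have : Function.update β i j k = β k :=
            Function.update_of_ne (fun hki => hiL (by rw [← hki]; exact hk)) _ _
          simp [this]
        rw [h1, Dop_congr L h2 g]
      have e3 : (cc (i :: L) α (Function.update β i j) : ℕ)
          = (α i).choose j * cc L α β := by
        unfold cc
        rw [List.map_cons, List.prod_cons, Function.update_self]
        congr 1
        exact congrArg List.prod (List.map_congr_left (fun k hk => by
          rw [Function.update_of_ne (fun hki => hiL (by rw [← hki]; exact hk)) _ _]))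
      rw [e1, e2, e3]
      push_cast
      ring
    rw [Finset.sum_congr rfl hterm]
    -- now reindex the double sum
    rw [← Finset.sum_product']
    refine Finset.sum_nbij' (fun p => Function.update p.1 i p.2)
      (fun γ => (Function.update γ i 0, γ i)) ?_ ?_ ?_ ?_ ?_
    · rintro ⟨β, j⟩ hp
      rw [Finset.mem_product] at hp
      obtain ⟨hβ, hj⟩ := hp
      rw [mem_BB]
      intro k
      dsimp only
      rcases eq_or_ne k i with rfl | hk
      · rw [Function.update_self, if_pos (List.mem_cons_self (a := k) (l := L))]
        exact Nat.lt_succ_iff.mp (Finset.mem_range.mp hj)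
      · rw [Function.update_of_ne hk]
        have h1 := mem_BB.mp hβ k
        by_cases hkL : k ∈ L
        · rw [if_pos (List.mem_cons_of_mem _ hkL)]
          rwa [if_pos hkL] at h1
        · rw [if_neg hkL] at h1
          rw [if_neg (by simp [hk, hkL])]
          exact h1
    · intro γ hγ
      rw [Finset.mem_product]
      constructor
      · rw [mem_BB]
        intro k
        dsimp only
        rcases eq_or_ne k i with rfl | hk
        · rw [Function.update_self]; exact Nat.zero_le _
        · rw [Function.update_of_ne hk]
          have h1 := mem_BB.mp hγ k
          by_cases hkL : k ∈ L
          · rw [if_pos hkL]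
            rwa [if_pos (List.mem_cons_of_mem _ hkL)] at h1
          · rw [if_neg (by simp [hk, hkL]), Nat.le_zero] at h1
            rw [if_neg hkL, Nat.le_zero]
            exact h1
      · rw [Finset.mem_range, Nat.lt_succ_iff]
        have h1 := mem_BB.mp hγ i
        rwa [if_pos (List.mem_cons_self (a := i) (l := L))] at h1
    · rintro ⟨β, j⟩ hp
      rw [Finset.mem_product] at hp
      have hβi : β i = 0 := by
        have := mem_BB.mp hp.1 i
        simpa [hiL] using this
      simp only [Function.update_idem, Function.update_self]
      rw [Prod.mk.injEq]
      refine ⟨?_, rfl⟩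
      rw [← hβi, Function.update_eq_self]
    · intro γ hγ
      simp only [Function.update_idem, Function.update_self]
      rw [Function.update_eq_self]
    · rintro ⟨β, j⟩ hp
      rfl

lemma aa_super (A : ℕ → ℝ) (hApos : ∀ p, 0 < A p) (hA0 : A 0 = 1)
    (hM4 : ∀ p : ℕ, 1 ≤ p → (A p / (Nat.factorial p)) ^ 2 ≤
      (A (p - 1) / (Nat.factorial (p - 1))) * (A (p + 1) / (Nat.factorial (p + 1)))) :
    ∀ p q : ℕ, (A p / (p.factorial : ℝ)) * (A q / (q.factorial : ℝ))
      ≤ A (p+q) / (((p+q).factorial : ℕ) : ℝ) := by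
  set aa : ℕ → ℝ := fun p => A p / ((p.factorial : ℕ) : ℝ) with haa
  have haapos : ∀ p, 0 < aa p := fun p =>
    div_pos (hApos p) (by exact_mod_cast Nat.cast_pos.mpr (Nat.factorial_pos p))
  have hr : ∀ p : ℕ, aa (p+1) / aa p ≤ aa (p+1+1) / aa (p+1) := by
    intro p
    have h := hM4 (p+1) (by omega)
    simp only [Nat.add_sub_cancel] at h
    rw [div_le_div_iff₀ (haapos p) (haapos (p+1))]
    have : aa (p+1) ^ 2 ≤ aa p * aa (p+1+1) := h
    nlinarith [haapos p, haapos (p+1), haapos (p+2)]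
  have hrmono : ∀ p q : ℕ, p ≤ q → aa (p+1) / aa p ≤ aa (q+1) / aa q :=
    fun p q hpq => monotone_nat_of_le_succ (f := fun p => aa (p+1) / aa p) hr hpq
  intro p q
  induction p with
  | zero =>
    simp only [Nat.factorial_zero, Nat.cast_one, zero_add, hA0]
    norm_num
  | succ p IH =>
    have e : p + 1 + q = p + q + 1 := by omega
    rw [e]
    show aa (p+1) * aa q ≤ aa (p+q+1)
    have IH' : aa p * aa q ≤ aa (p+q) := IH
    have hcross : aa (p+1) * aa (p+q) ≤ aa (p+q+1) * aa p := by
      have hcr := hrmono p (p+q) le_self_add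
      rwa [div_le_div_iff₀ (haapos p) (haapos (p+q))] at hcr
    nlinarith [IH', hcross, haapos p, haapos q, haapos (p+1), haapos (p+q),
      haapos (p+q+1), mul_pos (haapos (p+1)) (haapos q)]

lemma choose_fact_le (n j : ℕ) (hj : j ≤ n) :
    n.choose j * j.factorial * (n+1-j).factorial ≤ (n+1).factorial := by
  have e : n + 1 - j = (n - j) + 1 := by omega
  rw [e, Nat.factorial_succ]
  calc n.choose j * j.factorial * ((n - j + 1) * (n-j).factorial)
      = (n - j + 1) * (n.choose j * j.factorial * (n-j).factorial) := by ring
    _ = (n - j + 1) * n.factorial := by rw [Nat.choose_mul_factorial_mul_factorial hj]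
    _ ≤ (n + 1) * n.factorial := Nat.mul_le_mul_right _ (by omega)
    _ = (n+1).factorial := (Nat.factorial_succ n).symm

lemma key_comb (A : ℕ → ℝ) (hApos : ∀ p, 0 < A p) (hA0 : A 0 = 1)
    (hM4 : ∀ p : ℕ, 1 ≤ p → (A p / (Nat.factorial p)) ^ 2 ≤
      (A (p - 1) / (Nat.factorial (p - 1))) * (A (p + 1) / (Nat.factorial (p + 1))))
    (n j c : ℕ) (hj : j ≤ n) (hc : c ≤ n.choose j) :
    (c : ℝ) * (A j * A (n+1-j)) ≤ A (n+1) := by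
  have h1 := aa_super A hApos hA0 hM4 j (n+1-j)
  have e : j + (n+1-j) = n+1 := by omega
  rw [e] at h1
  have hfj : (0:ℝ) < (j.factorial : ℝ) := by exact_mod_cast Nat.factorial_pos j
  have hfk : (0:ℝ) < ((n+1-j).factorial : ℝ) := by exact_mod_cast Nat.factorial_pos (n+1-j)
  have hfN : (0:ℝ) < ((n+1).factorial : ℝ) := by exact_mod_cast Nat.factorial_pos (n+1)
  rw [div_mul_div_comm, div_le_div_iff₀ (by positivity) hfN] at h1
  -- h1 : A j * A (n+1-j) * (n+1)! ≤ A (n+1) * (j! * (n+1-j)!)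
  have h2 : (c : ℝ) * (j.factorial * (n+1-j).factorial) ≤ ((n+1).factorial : ℝ) := by
    have := choose_fact_le n j hj
    have hcc : c * (j.factorial * (n+1-j).factorial) ≤ (n+1).factorial := by
      calc c * (j.factorial * (n+1-j).factorial)
          ≤ n.choose j * (j.factorial * (n+1-j).factorial) :=
            Nat.mul_le_mul_right _ hc
        _ = n.choose j * j.factorial * (n+1-j).factorial := by ring
        _ ≤ (n+1).factorial := this
    exact_mod_cast hcc
  have hA1p : 0 < A (n+1) := hApos _
  have hAjk : 0 < A j * A (n+1-j) := mul_pos (hApos _) (hApos _)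
  nlinarith [mul_le_mul h1 h2 (by positivity) (by positivity)]

lemma geom_le_two {t : ℝ} (h0 : 0 ≤ t) (h2 : t ≤ 1/2) (g : ℕ) :
    ∑ c ∈ range g, t^c ≤ 2 := by
  induction g with
  | zero => simp
  | succ g IH =>
    rw [geom_sum_succ]
    have : t * ∑ c ∈ range g, t^c ≤ (1/2) * 2 :=
      mul_le_mul h2 IH (Finset.sum_nonneg fun c _ => pow_nonneg h0 c) (by norm_num)
    linarith

lemma Iic_eq_range_succ (g : ℕ) : Finset.Iic g = Finset.range (g+1) := by
  ext c; simp [Nat.lt_succ_iff]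

lemma geomIic_le {t : ℝ} (h0 : 0 ≤ t) (h2 : t ≤ 1/2) (g : ℕ) :
    ∑ c ∈ Finset.Iic g, t^c ≤ 1 + 2*t := by
  rw [Iic_eq_range_succ, geom_sum_succ]
  have : t * ∑ c ∈ range g, t^c ≤ t * 2 :=
    mul_le_mul_of_nonneg_left (geom_le_two h0 h2 g) h0
  linarith

lemma geomIic_rev_le {t : ℝ} (h0 : 0 ≤ t) (h2 : t ≤ 1/2) (g : ℕ) :
    ∑ c ∈ Finset.Iic g, t^(g-c) ≤ 1 + 2*t := by
  rw [Iic_eq_range_succ]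
  have hrefl := Finset.sum_range_reflect (fun c => t^c) (g+1)
  simp only [Nat.add_sub_cancel] at hrefl
  rw [hrefl, ← Iic_eq_range_succ]
  exact geomIic_le h0 h2 g
lemma choose_mul_choose_le (a b c d : ℕ) :
    a.choose b * c.choose d ≤ (a+c).choose (b+d) := by
  rw [Nat.add_choose_eq]
  exact Finset.single_le_sum (f := fun p : ℕ × ℕ => a.choose p.1 * c.choose p.2)
    (a := (b, d)) (fun p _ => Nat.zero_le _) (Finset.HasAntidiagonal.mem_antidiagonal.mpr rfl)

lemma prod_choose_le {ι : Type*} [DecidableEq ι] (s : Finset ι) (f g : ι → ℕ) :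
    (∏ i ∈ s, (f i).choose (g i)) ≤ (∑ i ∈ s, f i).choose (∑ i ∈ s, g i) := by
  induction s using Finset.induction with
  | empty => simp
  | insert x s hx IH =>
    rw [Finset.prod_insert hx, Finset.sum_insert hx, Finset.sum_insert hx]
    calc (f x).choose (g x) * ∏ i ∈ s, (f i).choose (g i)
        ≤ (f x).choose (g x) * (∑ i ∈ s, f i).choose (∑ i ∈ s, g i) :=
          Nat.mul_le_mul_left _ IH
      _ ≤ (f x + ∑ i ∈ s, f i).choose (g x + ∑ i ∈ s, g i) :=
          choose_mul_choose_le _ _ _ _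

lemma pow_one_add_le {x : ℝ} (h0 : 0 ≤ x) (h1 : x ≤ 1) (M : ℕ) :
    (1+x)^M ≤ 1 + M * 2^M * x := by
  induction M with
  | zero => simp
  | succ M IH =>
    have hb : (1+x)^M ≤ 2^M := pow_le_pow_left₀ (by linarith) (by linarith) M
    have h2M : (0:ℝ) ≤ 2^M := by positivity
    have hM0 : (0:ℝ) ≤ (M:ℝ) := Nat.cast_nonneg M
    have e1 : (1+x)^(M+1) = (1+x)^M + x*(1+x)^M := by ring
    rw [e1]
    have hx : x*(1+x)^M ≤ x*2^M := mul_le_mul_of_nonneg_left hb h0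
    have e2 : ((M:ℝ)+1) * 2^(M+1) * x = 2*((M:ℝ)+1)*2^M*x := by ring
    push_cast
    nlinarith [IH, hx, mul_nonneg h0 h2M, mul_nonneg (mul_nonneg hM0 h2M) h0]


-- small helpers
lemma jbr_pos (w : EE m) : 0 < jbr w := Real.sqrt_pos.mpr (by positivity)

lemma jbr_merge (ρ₁ : ℝ) (w : EE m) (p q r : ℕ) (hpq : p + q = r) :
    jbr w ^ (-(ρ₁ * (p:ℕ))) * jbr w ^ (-(ρ₁ * (q:ℕ))) = jbr w ^ (-(ρ₁ * (r:ℕ))) := by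
  rw [← Real.rpow_add (jbr_pos w)]
  congr 1
  have hc : ((p:ℝ) + (q:ℝ)) = (r:ℝ) := by exact_mod_cast congrArg (Nat.cast : ℕ → ℝ) hpq
  rw [← hc]
  ring

lemma cc_zero (L : List (Fin m)) (α : Fin m → ℕ) : cc L α 0 = 1 := by
  simp [cc]

lemma cc_finRange_eq (γ β : Fin m → ℕ) :
    cc (List.finRange m) γ β = ∏ k, (γ k).choose (β k) :=
  (Fin.prod_univ_def _).symm

lemma mem_BB_finRange {γ β : Fin m → ℕ} (hβ : β ∈ BB (List.finRange m) γ) :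
    ∀ k, β k ≤ γ k := by
  intro k
  have := mem_BB.mp hβ k
  rwa [if_pos (List.mem_finRange k)] at this

lemma BB_finRange (γ : Fin m → ℕ) :
    BB (List.finRange m) γ = Fintype.piFinset fun k => Finset.Iic (γ k) := by
  unfold BB
  congr 1
  funext k
  rw [if_pos (List.mem_finRange k)]

lemma sum_pe (δ : Fin m → ℕ) (i : Fin m) :
    ∑ k, Function.update δ i (δ i + 1) k = (∑ k, δ k) + 1 := by
  rw [Finset.sum_update_of_mem (Finset.mem_univ i), Finset.sdiff_singleton_eq_erase]
  have := Finset.add_sum_erase Finset.univ δ (Finset.mem_univ i)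
  omega

lemma zero_mem_BB (L : List (Fin m)) (γ : Fin m → ℕ) : (0 : Fin m → ℕ) ∈ BB L γ :=
  mem_BB.mpr fun k => Nat.zero_le _

theorem main_general (m : ℕ) (a : EE m → ℝ)
    (ha : ContDiff ℝ (⊤ : ℕ∞) a) (hapos : ∀ w, 0 < a w)
    (ρ₁ : ℝ) (hρ0 : 0 < ρ₁) (hρ1 : ρ₁ ≤ 1) (h C : ℝ) (hh : 0 < h) (hC : 0 < C)
    (A : ℕ → ℝ) (hApos : ∀ p, 0 < A p) (hA0 : A 0 = 1) (hA1 : A 1 = 1)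
    (hM4 : ∀ p : ℕ, 1 ≤ p →
      (A p / (Nat.factorial p)) ^ 2 ≤
        (A (p - 1) / (Nat.factorial (p - 1))) * (A (p + 1) / (Nat.factorial (p + 1))))
    (hest : ∀ (α : Fin m → ℕ) (w : EE m),
      |multiDeriv α a w| ≤
        C * h ^ (∑ i, α i) * A (∑ i, α i) * a w * jbr w ^ (-(ρ₁ * (∑ i, α i))))
    (s : ℝ) (hs : 1 < s) :
    ∃ h' C' : ℝ, 0 < h' ∧ 0 < C' ∧
      ∀ (α : Fin m → ℕ) (w : EE m),
        |multiDeriv α (fun w' => a w' ^ (1 / s)) w| ≤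
          C' * h' ^ (∑ i, α i) * A (∑ i, α i) * a w ^ (1 / s) *
            jbr w ^ (-(ρ₁ * (∑ i, α i))) := by
  set b : EE m → ℝ := fun w' => a w' ^ (1 / s) with hbdef
  have hs0 : (0:ℝ) < s := lt_trans one_pos hs
  have hbpos : ∀ w, 0 < b w := fun w => Real.rpow_pos_of_pos (hapos w) _
  have hb : ContDiff ℝ (⊤ : ℕ∞) b := by
    rw [contDiff_iff_contDiffAt]
    intro w
    exact ha.contDiffAt.rpow_const_of_ne (hapos w).ne'
  -- the fundamental identity
  have sab : ∀ (i : Fin m) (w : EE m),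
      s * a w * dirDeriv (ee i) b w = b w * dirDeriv (ee i) a w := by
    intro i w
    have hda : HasFDerivAt a (fderiv ℝ a w) w :=
      ((ha.differentiable (by simp)) w).hasFDerivAt
    have hdb : HasFDerivAt b ((1/s * a w ^ (1/s - 1)) • fderiv ℝ a w) w :=
      hda.rpow_const (Or.inl (hapos w).ne')
    have e1 : dirDeriv (ee i) b w = (1/s * a w ^ (1/s - 1)) * fderiv ℝ a w (ee i) := by
      show fderiv ℝ b w (ee i) = _
      rw [hdb.fderiv]
      simp [ContinuousLinearMap.smul_apply, smul_eq_mul]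
    have e2 : dirDeriv (ee i) a w = fderiv ℝ a w (ee i) := rfl
    rw [e1, e2]
    have e3 : a w ^ (1/s) = a w ^ (1/s - 1) * a w := by
      rw [← Real.rpow_add_one (hapos w).ne' (1/s - 1)]
      norm_num
    have e4 : b w = a w ^ (1/s) := rfl
    rw [e4, e3]
    field_simp
  -- constants
  obtain ⟨K, hKdef⟩ : ∃ K : ℝ, K = 2^m + m * 2^(m+1) := ⟨_, rfl⟩
  have hK0 : 0 < K := by rw [hKdef]; positivity
  obtain ⟨h', h'def⟩ : ∃ x : ℝ, x = 2*h*(1 + C*K) := ⟨_, rfl⟩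
  have hCK0 : 0 < C*K := mul_pos hC hK0
  have hh' : 0 < h' := by rw [h'def]; positivity
  obtain ⟨t, htdef⟩ : ∃ x : ℝ, x = h / h' := ⟨_, rfl⟩
  have ht0 : 0 < t := htdef ▸ div_pos hh hh'
  have hteq : t = 1/(2*(1+C*K)) := by
    rw [htdef, h'def]
    field_simp
  have ht2 : t ≤ 1/2 := by
    rw [hteq]
    rw [div_le_div_iff₀ (by positivity) (by norm_num)]
    nlinarith
  have hCKt : C*K*t ≤ 1/2 := by
    rw [hteq, mul_one_div, div_le_div_iff₀ (by positivity) (by norm_num)]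
    nlinarith
  have hh't : h = h' * t := by
    rw [htdef]
    field_simp
  refine ⟨h', 1, hh', one_pos, ?_⟩
  have P : ∀ n (α : Fin m → ℕ), (∑ i, α i) = n → ∀ w,
      |multiDeriv α b w| ≤ h' ^ n * A n * (a w ^ (1/s)) * jbr w ^ (-(ρ₁ * (n:ℕ))) := by
    intro n
    induction n using Nat.strong_induction_on with
    | _ n IH =>
      intro α hαn w
      cases n with
      | zero =>
        have hα0 : ∀ k ∈ Finset.univ (α := Fin m), α k = 0 :=
          (Finset.sum_eq_zero_iff).mp hαn
        have : multiDeriv α b = b := by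
          rw [multiDeriv_eq_Dop]
          exact Dop_zero _ (fun i _ => hα0 i (Finset.mem_univ i)) b
        rw [this]
        simp only [pow_zero, hA0, Nat.cast_zero, mul_zero, neg_zero, Real.rpow_zero]
        rw [abs_of_pos (hbpos w)]
        simp [hbdef]
      | succ n =>
        have hJp : ∀ p : ℕ, (0:ℝ) < jbr w ^ (-(ρ₁ * (p:ℕ))) :=
          fun p => Real.rpow_pos_of_pos (jbr_pos w) _
        have hB0 : (0:ℝ) < a w ^ (1/s) := Real.rpow_pos_of_pos (hapos w) _
        -- maximal index of the support
        have hSne : (Finset.univ.filter (fun k => α k ≠ 0)).Nonempty := by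
          by_contra hemp
          rw [Finset.not_nonempty_iff_eq_empty, Finset.filter_eq_empty_iff] at hemp
          have hz : ∑ i, α i = 0 := Finset.sum_eq_zero
            (fun i _ => not_not.mp (hemp (Finset.mem_univ i)))
          omega
        obtain ⟨i, hi⟩ : ∃ i : Fin m, α i ≠ 0 ∧ ∀ k, i < k → α k = 0 := by
          refine ⟨(Finset.univ.filter (fun k => α k ≠ 0)).max' hSne, ?_, ?_⟩
          · exact (Finset.mem_filter.mp (Finset.max'_mem _ hSne)).2
          · intro k hk
            by_contra hk0
            exact absurd (Finset.le_max' _ k (Finset.mem_filter.mpr ⟨Finset.mem_univ k, hk0⟩))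
              (not_le.mpr hk)
        obtain ⟨hαi, hmax⟩ := hi
        set γ : Fin m → ℕ := Function.update α i (α i - 1) with hγdef
        have hγi : γ i = α i - 1 := Function.update_self _ _ _
        have hγmax : ∀ k, i < k → γ k = 0 := by
          intro k hk
          rw [hγdef, Function.update_of_ne (ne_of_gt hk)]
          exact hmax k hk
        have hγsum : ∑ k, γ k = n := by
          have h1 : ∑ k, γ k = (α i - 1) + ∑ k ∈ Finset.univ.erase i, α k := by
            rw [hγdef, Finset.sum_update_of_mem (Finset.mem_univ i),
              Finset.sdiff_singleton_eq_erase]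
          have h2 := Finset.add_sum_erase Finset.univ α (Finset.mem_univ i)
          omega
        have hαγ : Function.update γ i (γ i + 1) = α := by
          funext k
          rcases eq_or_ne k i with rfl | hk
          · rw [Function.update_self, hγi]
            omega
          · rw [Function.update_of_ne hk, hγdef, Function.update_of_ne hk]
        have hFRnd : (List.finRange m).Nodup := List.nodup_finRange m
        have hFRpw : (List.finRange m).Pairwise (· < ·) := List.pairwise_lt_finRange m
        have hsa : ContDiff ℝ (⊤ : ℕ∞) (fun y => s * a y) := contDiff_const.mul ha
        have hdbc : ContDiff ℝ (⊤ : ℕ∞) (dirDeriv (ee i) b) := dirDeriv_contDiff hb _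
        have hdac : ContDiff ℝ (⊤ : ℕ∞) (dirDeriv (ee i) a) := dirDeriv_contDiff ha _
        have hpeel : ∀ (δ : Fin m → ℕ), (∀ k, i < k → δ k = 0) → ∀ (f : EE m → ℝ),
            Dop (List.finRange m) δ (dirDeriv (ee i) f)
              = multiDeriv (Function.update δ i (δ i + 1)) f := by
          intro δ hδ f
          rw [multiDeriv_eq_Dop]
          exact (Dop_peel _ hFRpw i (List.mem_finRange i) δ (fun k _ hik => hδ k hik) f).symm
        have hγβmax : ∀ β : Fin m → ℕ, ∀ k, i < k → (γ - β) k = 0 := by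
          intro β k hk
          show γ k - β k = 0
          rw [hγmax k hk]
          omega
        -- the key identity
        have hkey : s * a w * multiDeriv α b w
            = (∑ β ∈ BB (List.finRange m) γ, (cc (List.finRange m) γ β : ℝ) *
                (multiDeriv β b w *
                  multiDeriv (Function.update (γ-β) i ((γ-β) i + 1)) a w))
              - (∑ β ∈ (BB (List.finRange m) γ).erase 0, (cc (List.finRange m) γ β : ℝ) *
                ((s * multiDeriv β a w) *
                  multiDeriv (Function.update (γ-β) i ((γ-β) i + 1)) b w)) := by
          have hL1 := congrFun (Dop_leibniz (List.finRange m) hFRnd γ hsa hdbc) w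
          have hL2 := congrFun (Dop_leibniz (List.finRange m) hFRnd γ hb hdac) w
          have hfeq : (fun x => (fun y => s * a y) x * dirDeriv (ee i) b x)
              = (fun x => b x * dirDeriv (ee i) a x) := by
            funext x
            exact sab i x
          rw [hfeq] at hL1
          have hmain : (∑ β ∈ BB (List.finRange m) γ, (cc (List.finRange m) γ β : ℝ) *
                (Dop (List.finRange m) β (fun y => s * a y) w *
                  Dop (List.finRange m) (γ - β) (dirDeriv (ee i) b) w))
              = ∑ β ∈ BB (List.finRange m) γ, (cc (List.finRange m) γ β : ℝ) *
                (Dop (List.finRange m) β b w *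
                  Dop (List.finRange m) (γ - β) (dirDeriv (ee i) a) w) :=
            hL1.symm.trans hL2
          have hc1 : ∀ β ∈ BB (List.finRange m) γ,
              (cc (List.finRange m) γ β : ℝ) *
                (Dop (List.finRange m) β (fun y => s * a y) w *
                  Dop (List.finRange m) (γ - β) (dirDeriv (ee i) b) w)
              = (cc (List.finRange m) γ β : ℝ) *
                ((s * multiDeriv β a w) *
                  multiDeriv (Function.update (γ-β) i ((γ-β) i + 1)) b w) := by
            intro β _
            rw [Dop_const_mul (List.finRange m) β s ha, hpeel (γ-β) (hγβmax β) b,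
              ← multiDeriv_eq_Dop]
          have hc2 : ∀ β ∈ BB (List.finRange m) γ,
              (cc (List.finRange m) γ β : ℝ) *
                (Dop (List.finRange m) β b w *
                  Dop (List.finRange m) (γ - β) (dirDeriv (ee i) a) w)
              = (cc (List.finRange m) γ β : ℝ) *
                (multiDeriv β b w *
                  multiDeriv (Function.update (γ-β) i ((γ-β) i + 1)) a w) := by
            intro β _
            rw [hpeel (γ-β) (hγβmax β) a, ← multiDeriv_eq_Dop]
          rw [Finset.sum_congr rfl hc1, Finset.sum_congr rfl hc2] at hmain
          have hz := Finset.add_sum_erase (BB (List.finRange m) γ)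
            (fun β => (cc (List.finRange m) γ β : ℝ) *
                ((s * multiDeriv β a w) *
                  multiDeriv (Function.update (γ-β) i ((γ-β) i + 1)) b w))
            (zero_mem_BB _ γ)
          have hz0 : (cc (List.finRange m) γ (0 : Fin m → ℕ) : ℝ) *
              ((s * multiDeriv (0 : Fin m → ℕ) a w) *
                multiDeriv (Function.update (γ-(0:Fin m → ℕ)) i ((γ-(0:Fin m → ℕ)) i + 1)) b w)
              = s * a w * multiDeriv α b w := by
            have hm0 : multiDeriv (0 : Fin m → ℕ) a = a := by
              rw [multiDeriv_eq_Dop]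
              exact Dop_zero _ (fun _ _ => rfl) a
            have hγ0 : γ - (0 : Fin m → ℕ) = γ := by
              funext k; show γ k - 0 = γ k; omega
            rw [cc_zero, hm0, hγ0, hαγ]
            push_cast
            ring
          rw [hz0] at hz
          linarith [hz, hmain]
        -- termwise bound for the first sum
        have hterm2 : ∀ β ∈ BB (List.finRange m) γ,
            |(cc (List.finRange m) γ β : ℝ) *
                (multiDeriv β b w *
                  multiDeriv (Function.update (γ-β) i ((γ-β) i + 1)) a w)|
              ≤ (C * h'^(n+1) * A (n+1) *
                  ((a w ^ (1/s)) * a w * jbr w ^ (-(ρ₁ * ((n+1:ℕ))))) * t)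
                  * t^(n - ∑ k, β k) := by
          intro β hβ
          have hβle := mem_BB_finRange hβ
          have hjle : (∑ k, β k) ≤ n := by
            rw [← hγsum]
            exact Finset.sum_le_sum (fun k _ => hβle k)
          have hsub : ∑ k, (γ k - β k) = n - ∑ k, β k := by
            rw [Finset.sum_tsub_distrib Finset.univ (fun k _ => hβle k), hγsum]
          have hpes : ∑ k, Function.update (γ-β) i ((γ-β) i + 1) k
              = (n - ∑ k, β k) + 1 := by
            rw [sum_pe]
            simp only [Pi.sub_apply]
            omega
          have hbb := IH (∑ k, β k) (by omega) β rfl w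
          have haa := hest (Function.update (γ-β) i ((γ-β) i + 1)) w
          rw [hpes] at haa
          have hccle : cc (List.finRange m) γ β ≤ n.choose (∑ k, β k) := by
            rw [cc_finRange_eq]
            have hp := prod_choose_le Finset.univ γ β
            rwa [hγsum] at hp
          have hkeyA : (cc (List.finRange m) γ β : ℝ) *
              (A (∑ k, β k) * A (n - (∑ k, β k) + 1)) ≤ A (n+1) := by
            have hkc := key_comb A hApos hA0 hM4 n (∑ k, β k) _ hjle hccle
            rwa [show n + 1 - (∑ k, β k) = n - (∑ k, β k) + 1 by omega] at hkc
          have hpw : h'^(∑ k, β k) * h^(n - (∑ k, β k) + 1)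
              = h'^(n+1) * (t^(n - ∑ k, β k) * t) := by
            rw [hh't, mul_pow, ← mul_assoc, ← pow_add,
              show (∑ k, β k) + (n - (∑ k, β k) + 1) = n+1 by omega,
              pow_succ t (n - ∑ k, β k)]
          have hrest : (0:ℝ) ≤ C * ((h'^(∑ k, β k) * h^(n - (∑ k, β k) + 1)) *
              (((a w ^ (1/s)) * a w) *
                (jbr w ^ (-(ρ₁ * ((∑ k, β k : ℕ)))) *
                  jbr w ^ (-(ρ₁ * ((n - (∑ k, β k) + 1 : ℕ))))))) :=
            le_of_lt (mul_pos hC (mul_pos (mul_pos (pow_pos hh' _) (pow_pos hh _))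
              (mul_pos (mul_pos hB0 (hapos w)) (mul_pos (hJp _) (hJp _)))))
          calc |(cc (List.finRange m) γ β : ℝ) *
                (multiDeriv β b w *
                  multiDeriv (Function.update (γ-β) i ((γ-β) i + 1)) a w)|
              = (cc (List.finRange m) γ β : ℝ) *
                (|multiDeriv β b w| *
                  |multiDeriv (Function.update (γ-β) i ((γ-β) i + 1)) a w|) := by
                rw [abs_mul, abs_mul, abs_of_nonneg (by positivity : (0:ℝ) ≤ (cc (List.finRange m) γ β : ℝ))]
            _ ≤ (cc (List.finRange m) γ β : ℝ) *
                ((h' ^ (∑ k, β k) * A (∑ k, β k) * a w ^ (1/s) *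
                    jbr w ^ (-(ρ₁ * ((∑ k, β k : ℕ))))) *
                  (C * h ^ (n - (∑ k, β k) + 1) * A (n - (∑ k, β k) + 1) * a w *
                    jbr w ^ (-(ρ₁ * ((n - (∑ k, β k) + 1 : ℕ)))))) := by
                apply mul_le_mul_of_nonneg_left _ (by positivity)
                apply mul_le_mul hbb haa (abs_nonneg _)
                exact le_of_lt (mul_pos (mul_pos (mul_pos (pow_pos hh' _) (hApos _)) hB0) (hJp _))
            _ = ((cc (List.finRange m) γ β : ℝ) * (A (∑ k, β k) * A (n - (∑ k, β k) + 1))) *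
                (C * ((h'^(∑ k, β k) * h^(n - (∑ k, β k) + 1)) *
                  (((a w ^ (1/s)) * a w) *
                    (jbr w ^ (-(ρ₁ * ((∑ k, β k : ℕ)))) *
                      jbr w ^ (-(ρ₁ * ((n - (∑ k, β k) + 1 : ℕ)))))))) := by ring
            _ ≤ A (n+1) *
                (C * ((h'^(∑ k, β k) * h^(n - (∑ k, β k) + 1)) *
                  (((a w ^ (1/s)) * a w) *
                    (jbr w ^ (-(ρ₁ * ((∑ k, β k : ℕ)))) *
                      jbr w ^ (-(ρ₁ * ((n - (∑ k, β k) + 1 : ℕ)))))))) :=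
                mul_le_mul_of_nonneg_right hkeyA hrest
            _ = (C * h'^(n+1) * A (n+1) *
                  ((a w ^ (1/s)) * a w * jbr w ^ (-(ρ₁ * ((n+1:ℕ))))) * t)
                  * t^(n - ∑ k, β k) := by
                rw [hpw, jbr_merge ρ₁ w (∑ k, β k) (n - (∑ k, β k) + 1) (n+1) (by omega)]
                ring
        -- termwise bound for the second sum
        have hterm1 : ∀ β ∈ (BB (List.finRange m) γ).erase 0,
            |(cc (List.finRange m) γ β : ℝ) *
                ((s * multiDeriv β a w) *
                  multiDeriv (Function.update (γ-β) i ((γ-β) i + 1)) b w)|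
              ≤ (s * C * h'^(n+1) * A (n+1) *
                  ((a w ^ (1/s)) * a w * jbr w ^ (-(ρ₁ * ((n+1:ℕ))))))
                  * t^(∑ k, β k) := by
          intro β hβe
          obtain ⟨hβ0, hβ⟩ := Finset.mem_erase.mp hβe
          have hβle := mem_BB_finRange hβ
          have hjle : (∑ k, β k) ≤ n := by
            rw [← hγsum]
            exact Finset.sum_le_sum (fun k _ => hβle k)
          have hj1 : 1 ≤ ∑ k, β k := by
            by_contra hj0
            push_neg at hj0
            have hz : ∀ k ∈ Finset.univ, β k = 0 := Finset.sum_eq_zero_iff.mp (by omega)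
            exact hβ0 (funext fun k => hz k (Finset.mem_univ k))
          have hpes : ∑ k, Function.update (γ-β) i ((γ-β) i + 1) k
              = (n - ∑ k, β k) + 1 := by
            rw [sum_pe]
            simp only [Pi.sub_apply]
            have hsub : ∑ k, (γ k - β k) = n - ∑ k, β k := by
              rw [Finset.sum_tsub_distrib Finset.univ (fun k _ => hβle k), hγsum]
            omega
          have hbb := IH (n - (∑ k, β k) + 1) (by omega) _ hpes w
          have haa := hest β w
          have hccle : cc (List.finRange m) γ β ≤ n.choose (∑ k, β k) := by
            rw [cc_finRange_eq]
            have hp := prod_choose_le Finset.univ γ β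
            rwa [hγsum] at hp
          have hkeyA : (cc (List.finRange m) γ β : ℝ) *
              (A (∑ k, β k) * A (n - (∑ k, β k) + 1)) ≤ A (n+1) := by
            have hkc := key_comb A hApos hA0 hM4 n (∑ k, β k) _ hjle hccle
            rwa [show n + 1 - (∑ k, β k) = n - (∑ k, β k) + 1 by omega] at hkc
          have hpw1 : h^(∑ k, β k) * h'^(n - (∑ k, β k) + 1)
              = h'^(n+1) * t^(∑ k, β k) := by
            rw [hh't, mul_pow, mul_right_comm, ← pow_add,
              show (∑ k, β k) + (n - (∑ k, β k) + 1) = n+1 by omega]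
          have hrest : (0:ℝ) ≤ s * (C * ((h^(∑ k, β k) * h'^(n - (∑ k, β k) + 1)) *
              (((a w ^ (1/s)) * a w) *
                (jbr w ^ (-(ρ₁ * ((∑ k, β k : ℕ)))) *
                  jbr w ^ (-(ρ₁ * ((n - (∑ k, β k) + 1 : ℕ)))))))) :=
            le_of_lt (mul_pos hs0 (mul_pos hC (mul_pos (mul_pos (pow_pos hh _) (pow_pos hh' _))
              (mul_pos (mul_pos hB0 (hapos w)) (mul_pos (hJp _) (hJp _))))))
          calc |(cc (List.finRange m) γ β : ℝ) *
                ((s * multiDeriv β a w) *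
                  multiDeriv (Function.update (γ-β) i ((γ-β) i + 1)) b w)|
              = (cc (List.finRange m) γ β : ℝ) *
                ((s * |multiDeriv β a w|) *
                  |multiDeriv (Function.update (γ-β) i ((γ-β) i + 1)) b w|) := by
                rw [abs_mul, abs_mul, abs_mul,
                  abs_of_nonneg (by positivity : (0:ℝ) ≤ (cc (List.finRange m) γ β : ℝ)),
                  abs_of_pos hs0]
            _ ≤ (cc (List.finRange m) γ β : ℝ) *
                ((s * (C * h ^ (∑ k, β k) * A (∑ k, β k) * a w *
                    jbr w ^ (-(ρ₁ * ((∑ k, β k : ℕ)))))) *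
                  (h' ^ (n - (∑ k, β k) + 1) * A (n - (∑ k, β k) + 1) * a w ^ (1/s) *
                    jbr w ^ (-(ρ₁ * ((n - (∑ k, β k) + 1 : ℕ)))))) := by
                apply mul_le_mul_of_nonneg_left _ (by positivity)
                apply mul_le_mul (mul_le_mul_of_nonneg_left haa hs0.le) hbb (abs_nonneg _)
                exact le_of_lt (mul_pos hs0 (mul_pos (mul_pos (mul_pos
                  (mul_pos hC (pow_pos hh _)) (hApos _)) (hapos w)) (hJp _)))
            _ = ((cc (List.finRange m) γ β : ℝ) * (A (∑ k, β k) * A (n - (∑ k, β k) + 1))) *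
                (s * (C * ((h^(∑ k, β k) * h'^(n - (∑ k, β k) + 1)) *
                  (((a w ^ (1/s)) * a w) *
                    (jbr w ^ (-(ρ₁ * ((∑ k, β k : ℕ)))) *
                      jbr w ^ (-(ρ₁ * ((n - (∑ k, β k) + 1 : ℕ))))))))) := by ring
            _ ≤ A (n+1) *
                (s * (C * ((h^(∑ k, β k) * h'^(n - (∑ k, β k) + 1)) *
                  (((a w ^ (1/s)) * a w) *
                    (jbr w ^ (-(ρ₁ * ((∑ k, β k : ℕ)))) *
                      jbr w ^ (-(ρ₁ * ((n - (∑ k, β k) + 1 : ℕ))))))))) :=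
                mul_le_mul_of_nonneg_right hkeyA hrest
            _ = (s * C * h'^(n+1) * A (n+1) *
                  ((a w ^ (1/s)) * a w * jbr w ^ (-(ρ₁ * ((n+1:ℕ))))))
                  * t^(∑ k, β k) := by
                rw [hpw1, jbr_merge ρ₁ w (∑ k, β k) (n - (∑ k, β k) + 1) (n+1) (by omega)]
                ring
        -- sum bounds
        have hsum2 : ∑ β ∈ BB (List.finRange m) γ, t^(n - ∑ k, β k) ≤ 2^m := by
          have he : ∀ β ∈ BB (List.finRange m) γ,
              t^(n - ∑ k, β k) = ∏ k, t^(γ k - β k) := by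
            intro β hβ
            rw [Finset.prod_pow_eq_pow_sum]
            congr 1
            rw [Finset.sum_tsub_distrib Finset.univ (fun k _ => mem_BB_finRange hβ k), hγsum]
          have hps := Finset.prod_univ_sum (fun k => Finset.Iic (γ k))
            (fun k c => t^(γ k - c))
          rw [Finset.sum_congr rfl he, BB_finRange, ← hps]
          calc ∏ k, ∑ c ∈ Finset.Iic (γ k), t^(γ k - c)
              ≤ ∏ _k : Fin m, (1 + 2*t) := by
                apply Finset.prod_le_prod
                · intro k _
                  exact Finset.sum_nonneg fun c _ => pow_nonneg ht0.le _
                · intro k _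
                  exact geomIic_rev_le ht0.le ht2 (γ k)
            _ = (1+2*t)^m := by rw [Finset.prod_const, Finset.card_univ, Fintype.card_fin]
            _ ≤ 2^m := pow_le_pow_left₀ (by linarith) (by linarith) m
        have hsum1 : ∑ β ∈ (BB (List.finRange m) γ).erase 0, t^(∑ k, β k)
            ≤ (m:ℝ) * 2^(m+1) * t := by
          have hfull : ∑ β ∈ BB (List.finRange m) γ, t^(∑ k, β k) ≤ (1+2*t)^m := by
            have he : ∀ β ∈ BB (List.finRange m) γ, t^(∑ k, β k) = ∏ k, t^(β k) := by
              intro β _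
              rw [Finset.prod_pow_eq_pow_sum]
            have hps := Finset.prod_univ_sum (fun k => Finset.Iic (γ k))
              (fun k c => t^c)
            rw [Finset.sum_congr rfl he, BB_finRange, ← hps]
            calc ∏ k, ∑ c ∈ Finset.Iic (γ k), t^c
                ≤ ∏ _k : Fin m, (1+2*t) := by
                  apply Finset.prod_le_prod
                  · intro k _
                    exact Finset.sum_nonneg fun c _ => pow_nonneg ht0.le _
                  · intro k _
                    exact geomIic_le ht0.le ht2 (γ k)
              _ = (1+2*t)^m := by rw [Finset.prod_const, Finset.card_univ, Fintype.card_fin]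
          have hz2 := Finset.add_sum_erase (BB (List.finRange m) γ)
            (fun β => t^(∑ k, β k)) (zero_mem_BB _ γ)
          have hz20 : t^(∑ k, (0 : Fin m → ℕ) k) = 1 := by simp
          rw [hz20] at hz2
          have hple := pow_one_add_le (by linarith : (0:ℝ) ≤ 2*t) (by linarith) m
          have he2 : (m:ℝ) * 2^m * (2*t) = m * 2^(m+1) * t := by
            rw [pow_succ]
            ring
          linarith [hfull, hz2, hple]
        -- combine
        have habs0 : ∀ x y : ℝ, |x - y| ≤ |x| + |y| := fun x y => by
          calc |x - y| = |x + -y| := by rw [sub_eq_add_neg]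
            _ ≤ |x| + |-y| := abs_add_le x (-y)
            _ = |x| + |y| := by rw [abs_neg]
        have hD2 : (0:ℝ) ≤ C * h'^(n+1) * A (n+1) *
            ((a w ^ (1/s)) * a w * jbr w ^ (-(ρ₁ * ((n+1:ℕ))))) * t :=
          le_of_lt (mul_pos (mul_pos (mul_pos (mul_pos hC (pow_pos hh' _)) (hApos _))
            (mul_pos (mul_pos hB0 (hapos w)) (hJp _))) ht0)
        have hD1 : (0:ℝ) ≤ s * C * h'^(n+1) * A (n+1) *
            ((a w ^ (1/s)) * a w * jbr w ^ (-(ρ₁ * ((n+1:ℕ))))) :=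
          le_of_lt (mul_pos (mul_pos (mul_pos (mul_pos hs0 hC) (pow_pos hh' _)) (hApos _))
            (mul_pos (mul_pos hB0 (hapos w)) (hJp _)))
        have habs : |s * a w * multiDeriv α b w|
            ≤ (C * h'^(n+1) * A (n+1) *
                ((a w ^ (1/s)) * a w * jbr w ^ (-(ρ₁ * ((n+1:ℕ))))) * t) * 2^m
              + (s * C * h'^(n+1) * A (n+1) *
                ((a w ^ (1/s)) * a w * jbr w ^ (-(ρ₁ * ((n+1:ℕ)))))) *
                ((m:ℝ) * 2^(m+1) * t) := by
          rw [hkey]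
          refine le_trans (habs0 _ _) ?_
          refine le_trans (add_le_add (Finset.abs_sum_le_sum_abs _ _)
            (Finset.abs_sum_le_sum_abs _ _)) ?_
          refine le_trans (add_le_add (Finset.sum_le_sum hterm2) (Finset.sum_le_sum hterm1)) ?_
          rw [← Finset.mul_sum, ← Finset.mul_sum]
          exact add_le_add (mul_le_mul_of_nonneg_left hsum2 hD2)
            (mul_le_mul_of_nonneg_left hsum1 hD1)
        have hcoef : (C * h'^(n+1) * A (n+1) *
                ((a w ^ (1/s)) * a w * jbr w ^ (-(ρ₁ * ((n+1:ℕ))))) * t) * 2^m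
              + (s * C * h'^(n+1) * A (n+1) *
                ((a w ^ (1/s)) * a w * jbr w ^ (-(ρ₁ * ((n+1:ℕ)))))) *
                ((m:ℝ) * 2^(m+1) * t)
            ≤ s * a w * (h' ^ (n+1) * A (n+1) * a w ^ (1/s) *
                jbr w ^ (-(ρ₁ * ((n+1:ℕ))))) := by
          have hKt : C * t * ((2:ℝ)^m + (m:ℝ)*2^(m+1)) ≤ 1/2 := by
            have he3 : C * K * t = C * t * ((2:ℝ)^m + (m:ℝ)*2^(m+1)) := by
              rw [hKdef]
              ring
            linarith [hCKt, he3.symm.le, he3.le]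
          have hc1 : (0:ℝ) ≤ C*t*2^m := by positivity
          have hc2 : (0:ℝ) ≤ C*t*((m:ℝ)*2^(m+1)) := by positivity
          have hco : C*t*2^m + s*(C*t*((m:ℝ)*2^(m+1))) ≤ s := by
            nlinarith [hKt, hc1, hc2, hs, mul_le_mul_of_nonneg_left hKt (le_of_lt hs0)]
          have hQ : (0:ℝ) < h'^(n+1) * A (n+1) * a w ^ (1/s) *
              jbr w ^ (-(ρ₁ * ((n+1:ℕ)))) * a w :=
            mul_pos (mul_pos (mul_pos (mul_pos (pow_pos hh' _) (hApos _)) hB0) (hJp _)) (hapos w)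
          calc (C * h'^(n+1) * A (n+1) *
                ((a w ^ (1/s)) * a w * jbr w ^ (-(ρ₁ * ((n+1:ℕ))))) * t) * 2^m
              + (s * C * h'^(n+1) * A (n+1) *
                ((a w ^ (1/s)) * a w * jbr w ^ (-(ρ₁ * ((n+1:ℕ)))))) *
                ((m:ℝ) * 2^(m+1) * t)
              = (C*t*2^m + s*(C*t*((m:ℝ)*2^(m+1)))) *
                (h'^(n+1) * A (n+1) * a w ^ (1/s) *
                  jbr w ^ (-(ρ₁ * ((n+1:ℕ)))) * a w) := by ring
            _ ≤ s * (h'^(n+1) * A (n+1) * a w ^ (1/s) *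
                  jbr w ^ (-(ρ₁ * ((n+1:ℕ)))) * a w) :=
                mul_le_mul_of_nonneg_right hco hQ.le
            _ = s * a w * (h' ^ (n+1) * A (n+1) * a w ^ (1/s) *
                  jbr w ^ (-(ρ₁ * ((n+1:ℕ))))) := by ring
        have hmabs : s * a w * |multiDeriv α b w|
            ≤ s * a w * (h' ^ (n+1) * A (n+1) * a w ^ (1/s) *
                jbr w ^ (-(ρ₁ * ((n+1:ℕ))))) := by
          have heq : |s * a w * multiDeriv α b w| = s * a w * |multiDeriv α b w| := by
            rw [abs_mul, abs_mul, abs_of_pos hs0, abs_of_pos (hapos w)]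
          rw [← heq]
          exact le_trans habs hcoef
        exact le_of_mul_le_mul_left (by
          calc s * a w * |multiDeriv α b w|
              ≤ s * a w * (h' ^ (n+1) * A (n+1) * a w ^ (1/s) *
                  jbr w ^ (-(ρ₁ * ((n+1:ℕ))))) := hmabs) (mul_pos hs0 (hapos w))
  intro α w
  have := P (∑ i, α i) α rfl w
  rw [one_mul]
  exact this


end S16

/-- If `a : ℝ^{2d} → (0,∞)` is smooth and satisfies
`|D^α a(w)| ≤ C h^{|α|} A_{|α|} a(w) ⟨w⟩^{-ρ₁|α|}` with `A_0 = A_1 = 1`, (M.4), (M.3)',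
then for every `s > 1` there are `h', C' > 0` with
`|D^α (a(w)^{1/s})| ≤ C' h'^{|α|} A_{|α|} a(w)^{1/s} ⟨w⟩^{-ρ₁|α|}` for all `α, w`. -/
theorem stmt16 (d : ℕ) (a : EuclideanSpace ℝ (Fin (2 * d)) → ℝ)
    (ha : ContDiff ℝ (⊤ : ℕ∞) a) (hapos : ∀ w, 0 < a w)
    (ρ₁ : ℝ) (hρ0 : 0 < ρ₁) (hρ1 : ρ₁ ≤ 1) (h C : ℝ) (hh : 0 < h) (hC : 0 < C)
    (A : ℕ → ℝ) (hApos : ∀ p, 0 < A p) (hA0 : A 0 = 1) (hA1 : A 1 = 1)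
    (hM4 : ∀ p : ℕ, 1 ≤ p →
      (A p / (Nat.factorial p)) ^ 2 ≤
        (A (p - 1) / (Nat.factorial (p - 1))) * (A (p + 1) / (Nat.factorial (p + 1))))
    (hM3' : Summable (fun p : ℕ => A p / A (p + 1)))
    (hest : ∀ (α : Fin (2 * d) → ℕ) (w : EuclideanSpace ℝ (Fin (2 * d))),
      |multiDeriv α a w| ≤
        C * h ^ (∑ i, α i) * A (∑ i, α i) * a w * jbr w ^ (-(ρ₁ * (∑ i, α i))))
    (s : ℝ) (hs : 1 < s) :
    ∃ h' C' : ℝ, 0 < h' ∧ 0 < C' ∧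
      ∀ (α : Fin (2 * d) → ℕ) (w : EuclideanSpace ℝ (Fin (2 * d))),
        |multiDeriv α (fun w' => a w' ^ (1 / s)) w| ≤
          C' * h' ^ (∑ i, α i) * A (∑ i, α i) * a w ^ (1 / s) *
            jbr w ^ (-(ρ₁ * (∑ i, α i))) := by
  exact S16.main_general (2*d) a ha hapos ρ₁ hρ0 hρ1 h C hh hC A hApos hA0 hA1 hM4 hest s hs
end

section
/- Let $A_p$ be a positive sequence with $A_0=A_1=1$ satisfying (M.4) (i.e., $A_p/p!$ is log-convex). Then $p\,A_{p-1}\le A_p$ for all $p\in\mathbb{Z}_+$, and for multi-indices: if $\beta+\gamma+\delta=\alpha$ in $\mathbb{N}^{2d}$, $l\ge 1$, $j\ge l$, and $|\beta|+|\gamma|+l\ge 1$, $|\delta|+2j-l\ge 1$, then $\frac{|\alpha|!}{|\beta|!|\gamma|!|\delta|!} A_{|\beta|}A_{|\gamma|+l}A_{|\delta|+2j-l} \le (|\alpha|+2j)\, A_{|\alpha|+2j-1}$. -/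
/-!
Write `A p = p! * N p`. Condition (M.4) says that `N` is log-convex, i.e. `N (p + 1) / N p` is
nondecreasing, and `A 0 = A 1 = 1` gives `N 0 = N 1 = 1`. Hence `N` is nondecreasing, which is
`p * A (p - 1) ≤ A p`, and `N a * N b ≤ N c * N (a + b - c)` whenever `c ≤ a, b`. Applying the
latter with `c = 0` and then `c = 1` bounds `N |β| * N (|γ| + l) * N (|δ| + 2j - l)` by
`N (|α| + 2j - 1)`; the factorials that remain are compared using that `(n + k)! / n!` is
nondecreasing in `n`.
-/

open Nat

def LogConvexSeq (N : ℕ → ℝ) : Prop :=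
  ∀ p, N (p + 1) ^ 2 ≤ N p * N (p + 2)

namespace LogConvexSeq

variable {N : ℕ → ℝ}

theorem mul_succ_le_mul_succ (hpos : ∀ p, 0 < N p) (hN : LogConvexSeq N) {a b : ℕ}
    (hab : a ≤ b) : N (a + 1) * N b ≤ N a * N (b + 1) := by
  induction b, hab using Nat.le_induction with
  | base => rw [mul_comm]
  | succ b _ ih =>
    have key := mul_le_mul ih (hN b) (sq_nonneg _) (by positivity [hpos a, hpos (b + 1)])
    exact le_of_mul_le_mul_right (by linear_combination key) (mul_pos (hpos b) (hpos (b + 1)))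

theorem monotone (hpos : ∀ p, 0 < N p) (hN : LogConvexSeq N) (h01 : N 0 ≤ N 1) :
    Monotone N := by
  refine monotone_nat_of_le_succ fun q => le_of_mul_le_mul_left ?_ (hpos 1)
  calc N 1 * N q ≤ N 0 * N (q + 1) := hN.mul_succ_le_mul_succ hpos q.zero_le
    _ ≤ N 1 * N (q + 1) := mul_le_mul_of_nonneg_right h01 (hpos _).le

theorem mul_le_mul_add_sub (hpos : ∀ p, 0 < N p) (hN : LogConvexSeq N) {a b c : ℕ}
    (hca : c ≤ a) (hcb : c ≤ b) : N a * N b ≤ N c * N (a + b - c) := by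
  wlog hab : a ≤ b generalizing a b
  · rw [mul_comm, add_comm]
    exact this hcb hca (by omega)
  obtain ⟨k, rfl⟩ := Nat.exists_eq_add_of_le hca
  rw [show c + k + b - c = b + k by omega]
  clear hca hcb
  induction k generalizing b with
  | zero => rfl
  | succ k ih =>
    calc N (c + (k + 1)) * N b ≤ N (c + k) * N (b + 1) :=
          hN.mul_succ_le_mul_succ hpos (show c + k ≤ b by omega)
      _ ≤ N c * N (b + 1 + k) := ih (by omega)
      _ = N c * N (b + (k + 1)) := by rw [add_right_comm, add_assoc]

theorem mul_mul_le (hpos : ∀ p, 0 < N p) (hN : LogConvexSeq N) (h0 : N 0 = 1) (h1 : N 1 = 1)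
    {x y z : ℕ} (hxy : 1 ≤ x + y) (hz : 1 ≤ z) : N x * N y * N z ≤ N (x + y + z - 1) := by
  have hxy' : N x * N y ≤ N (x + y) := by
    simpa [h0] using hN.mul_le_mul_add_sub hpos x.zero_le y.zero_le
  calc N x * N y * N z ≤ N (x + y) * N z := mul_le_mul_of_nonneg_right hxy' (hpos z).le
    _ ≤ N (x + y + z - 1) := by simpa [h1] using hN.mul_le_mul_add_sub hpos hxy hz

end LogConvexSeq

theorem factorial_mul_factorial_add_le {g a : ℕ} (k : ℕ) (h : g ≤ a) :
    a ! * (g + k)! ≤ g ! * (a + k)! := by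
  rw [← factorial_mul_ascFactorial g k, ← factorial_mul_ascFactorial a k, mul_left_comm]
  gcongr

theorem factorial_mul_factorial_mul_factorial_le (b g e l k : ℕ) :
    (b + g + e)! * (g + l)! * (e + k)! ≤ (b + g + e + l + k)! * g ! * e ! :=
  calc (b + g + e)! * (g + l)! * (e + k)! ≤ g ! * (b + g + e + l)! * (e + k)! :=
        Nat.mul_le_mul_right _ (factorial_mul_factorial_add_le l (by omega))
    _ ≤ g ! * (e ! * (b + g + e + l + k)!) := by
        rw [mul_assoc]
        exact Nat.mul_le_mul_left _ (factorial_mul_factorial_add_le k (by omega))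
    _ = (b + g + e + l + k)! * g ! * e ! := by ring

section M4

variable {A : ℕ → ℝ}

theorem logConvexSeq_div_factorial
    (hM4 : ∀ p : ℕ, 1 ≤ p →
      (A p / (Nat.factorial p)) ^ 2 ≤
        (A (p - 1) / (Nat.factorial (p - 1))) * (A (p + 1) / (Nat.factorial (p + 1)))) :
    LogConvexSeq fun p => A p / p ! := fun p => by
  simpa using hM4 (p + 1) (by omega)

variable (hApos : ∀ p, 0 < A p) (hA0 : A 0 = 1) (hA1 : A 1 = 1)
  (hA : LogConvexSeq fun p => A p / p !)
include hApos hA0 hA1 hA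

theorem natCast_mul_pred_le (p : ℕ) (hp : 1 ≤ p) : (p : ℝ) * A (p - 1) ≤ A p := by
  have hmono := hA.monotone (fun p => by positivity [hApos p]) (by simp [hA0, hA1])
    (Nat.sub_le p 1)
  have hp' : (p : ℝ) * (p - 1)! = p ! := by exact_mod_cast mul_factorial_pred (by omega)
  rw [div_le_div_iff₀ (by positivity) (by positivity), ← hp'] at hmono
  have h : p * A (p - 1) * (p - 1)! ≤ A p * (p - 1)! := by linear_combination hmono
  exact le_of_mul_le_mul_right h (by positivity)

theorem multinomial_mul_mul_mul_le {b g e l k : ℕ} (hbgl : 1 ≤ b + g + l) (hek : 1 ≤ e + k) :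
    ((b + g + e)! : ℝ) / (b ! * g ! * e !) * A b * A (g + l) * A (e + k) ≤
      ((b + g + e + l + k : ℕ) : ℝ) * A (b + g + e + l + k - 1) := by
  set N : ℕ → ℝ := fun p => A p / (p !)
  set m := b + g + e + l + k
  have hpos : ∀ p, 0 < N p := fun p => by positivity [hApos p]
  have hAN : ∀ p, A p = p ! * N p := fun p => by simp only [N]; field_simp
  have hfact : ((b + g + e)! * (g + l)! * (e + k)! : ℝ) ≤ m ! * g ! * e ! := by
    exact_mod_cast factorial_mul_factorial_mul_factorial_le b g e l k
  have hprod : N b * N (g + l) * N (e + k) ≤ N (m - 1) := by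
    simpa [m, show b + (g + l) + (e + k) = m by omega] using
      hA.mul_mul_le hpos (by simp [N, hA0]) (by simp [N, hA1]) (by omega : 1 ≤ b + (g + l)) hek
  have hm : (m : ℝ) * (m - 1)! = m ! := by exact_mod_cast mul_factorial_pred (by omega)
  rw [hAN b, hAN (g + l), hAN (e + k), hAN (m - 1), ← mul_assoc (m : ℝ), hm, div_mul_eq_mul_div,
    div_mul_eq_mul_div, div_mul_eq_mul_div, div_le_iff₀ (by positivity)]
  calc (b + g + e)! * (b ! * N b) * ((g + l)! * N (g + l)) * ((e + k)! * N (e + k))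
      = b ! * (((b + g + e)! * (g + l)! * (e + k)! : ℝ) * (N b * N (g + l) * N (e + k))) := by
        ring
    _ ≤ b ! * ((m ! * g ! * e ! : ℝ) * N (m - 1)) := by
        gcongr
        positivity [hpos b, hpos (g + l), hpos (e + k)]
    _ = m ! * N (m - 1) * (b ! * g ! * e !) := by ring

end M4

/-- For a positive sequence `A` with `A 0 = A 1 = 1` satisfying (M.4)
(log-convexity of `A p / p!`): (a) `p · A_{p-1} ≤ A_p` for all `p ≥ 1`; and (b) for
multi-indices `β + γ + δ = α` in `ℕ^{2d}`, `1 ≤ l ≤ j`, with `|β|+|γ|+l ≥ 1` and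
`|δ|+2j-l ≥ 1`,
`(|α|!/(|β|!|γ|!|δ|!)) A_{|β|} A_{|γ|+l} A_{|δ|+2j-l} ≤ (|α|+2j) A_{|α|+2j-1}`. -/
theorem stmt19 (A : ℕ → ℝ) (hApos : ∀ p, 0 < A p) (hA0 : A 0 = 1) (hA1 : A 1 = 1)
    (hM4 : ∀ p : ℕ, 1 ≤ p →
      (A p / (Nat.factorial p)) ^ 2 ≤
        (A (p - 1) / (Nat.factorial (p - 1))) * (A (p + 1) / (Nat.factorial (p + 1)))) :
    (∀ p : ℕ, 1 ≤ p → (p : ℝ) * A (p - 1) ≤ A p) ∧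
      (∀ (d : ℕ) (α β γ δ : Fin (2 * d) → ℕ), β + γ + δ = α →
        ∀ l j : ℕ, 1 ≤ l → l ≤ j →
          1 ≤ (∑ i, β i) + (∑ i, γ i) + l → 1 ≤ (∑ i, δ i) + 2 * j - l →
          ((Nat.factorial (∑ i, α i) : ℝ) /
              ((Nat.factorial (∑ i, β i) : ℝ) * (Nat.factorial (∑ i, γ i) : ℝ) *
                (Nat.factorial (∑ i, δ i) : ℝ))) *
              A (∑ i, β i) * A ((∑ i, γ i) + l) * A ((∑ i, δ i) + 2 * j - l) ≤
            (((∑ i, α i) + 2 * j : ℕ) : ℝ) * A ((∑ i, α i) + 2 * j - 1)) := by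
  have hA := logConvexSeq_div_factorial hM4
  refine ⟨natCast_mul_pred_le hApos hA0 hA1 hA, ?_⟩
  intro d α β γ δ hsum l j _ hlj hβγl hδjl
  have hα : ∑ i, α i = ∑ i, β i + ∑ i, γ i + ∑ i, δ i := by
    simp only [← hsum, Pi.add_apply, Finset.sum_add_distrib]
  have hl : l ≤ 2 * j := by omega
  rw [Nat.add_sub_assoc hl] at hδjl ⊢
  rw [hα, show ∑ i, β i + ∑ i, γ i + ∑ i, δ i + 2 * j =
    ∑ i, β i + ∑ i, γ i + ∑ i, δ i + l + (2 * j - l) by omega]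
  exact multinomial_mul_mul_mul_le hApos hA0 hA1 hA hβγl hδjl
end
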